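/- arXiv:2603.18952 — 8 statements merged into one kernel-verified Lean document; each statement's English description precedes it below -/
import Mathlib

section
/- For every integer k ≥ 4 and every real ε > 0 there exists N such that for every integer n ≥ N and every integer e with ⌊n²/4⌋ + 1 ≤ e ≤ n(n−1)/2, we have f(n, e, C_{2k+1}) ≤ e/2 + (n/2)·√(e − n²/4) + ε·n². -/
open SimpleGraph

/-- The maximal anti-Ramsey number `f(n, e, C_L)`: the minimum integer `c` for which there
exists an `n`-vertex simple graph with at least `e` edges admitting an edge-coloring using at
most `c` colors in which every copy of the cycle `C_L` (i.e. every cycle of length `L`) is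
rainbow. -/
noncomputable def maxAntiRamseyCycle (n e L : ℕ) : ℕ :=
  sInf {c : ℕ | ∃ G : SimpleGraph (Fin n), e ≤ G.edgeSet.ncard ∧
    ∃ χ : Sym2 (Fin n) → ℕ, (χ '' G.edgeSet).ncard ≤ c ∧
      ∀ ⦃v : Fin n⦄ (w : G.Walk v v), w.IsCycle → w.length = L → (w.edges.map χ).Nodup}

/-!
Take two disjoint cliques on `m` and `n - m ≤ m` vertices and fold the smaller one into the
larger by an injection `Fin (n - m) → Fin m`; colour an edge by the unordered pair of its folded
endpoints. A cycle stays inside one clique, where the folding is injective, so every cycle is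
rainbow, and at most `C(m, 2)` colours occur. The graph has `n²/4 + (m - n/2)² - n/2` edges, so
`m ≈ n/2 + √(e - n²/4) + √n` gives at least `e` of them, while `C(m, 2) ≤ m²/2` exceeds
`e/2 + (n/2)√(e - n²/4)` by `O(n^{3/2}) ≤ εn²`.
-/

namespace SimpleGraph

variable {V W : Type*} {G : SimpleGraph V} {φ : V → W}

theorem Walk.IsTrail.nodup_map_sym2Map_edges
    (hφ : ∀ ⦃u v⦄, G.Reachable u v → φ u = φ v → u = v) {x y : V} {w : G.Walk x y}
    (hw : w.IsTrail) : (w.edges.map (Sym2.map φ)).Nodup := by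
  classical
  have reach : ∀ ⦃p q⦄, s(p, q) ∈ w.edges → G.Reachable x p ∧ G.Reachable x q :=
    fun p q h => ⟨⟨w.takeUntil p (w.fst_mem_support_of_mem_edges h)⟩,
      ⟨w.takeUntil q (w.snd_mem_support_of_mem_edges h)⟩⟩
  have inj : ∀ ⦃p q⦄, G.Reachable x p → G.Reachable x q → φ p = φ q → p = q :=
    fun p q hp hq => hφ (hp.symm.trans hq)
  refine hw.edges_nodup.map_on fun z hz z' hz' hzz' => ?_
  induction z using Sym2.ind with | _ a b => ?_
  induction z' using Sym2.ind with | _ c d => ?_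
  obtain ⟨ha, hb⟩ := reach hz
  obtain ⟨hc, hd⟩ := reach hz'
  simp only [Sym2.map_mk, Sym2.eq_iff] at hzz' ⊢
  rcases hzz' with ⟨h1, h2⟩ | ⟨h1, h2⟩
  · exact .inl ⟨inj ha hc h1, inj hb hd h2⟩
  · exact .inr ⟨inj ha hd h1, inj hb hc h2⟩

theorem ncard_image_sym2Map_edgeSet_le [Finite W] (hφ : ∀ ⦃u v⦄, G.Adj u v → φ u ≠ φ v) :
    (Sym2.map φ '' G.edgeSet).ncard ≤ (Nat.card W).choose 2 := by
  rw [← Sym2.ncard_diagSet_compl]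
  refine Set.ncard_le_ncard ?_ (Set.toFinite _)
  rintro _ ⟨z, hz, rfl⟩
  induction z using Sym2.ind with | _ a b => ?_
  simpa [Sym2.mem_diagSet] using hφ hz

theorem ncard_edgeSet_top [Fintype V] [DecidableEq V] :
    (⊤ : SimpleGraph V).edgeSet.ncard = (Fintype.card V).choose 2 := by
  rw [← Nat.card_coe_set_eq, Nat.card_eq_fintype_card, ← edgeFinset_card,
    card_edgeFinset_top_eq_card_choose_two]

theorem ncard_edgeSet_sum [Finite V] [Finite W] (G : SimpleGraph V) (H : SimpleGraph W) :
    (G ⊕g H).edgeSet.ncard = G.edgeSet.ncard + H.edgeSet.ncard := by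
  rw [← Nat.card_coe_set_eq, Nat.card_congr edgeSetSumEquiv, Nat.card_sum,
    Nat.card_coe_set_eq, Nat.card_coe_set_eq]

end SimpleGraph

theorem maxAntiRamseyCycle_le {V : Type*} [Finite V] (G : SimpleGraph V) (χ : Sym2 V → ℕ)
    {e L c : ℕ} (he : e ≤ G.edgeSet.ncard) (hχ : (χ '' G.edgeSet).ncard ≤ c)
    (hrainbow : ∀ ⦃v⦄ (w : G.Walk v v), w.IsCycle → w.length = L → (w.edges.map χ).Nodup) :
    maxAntiRamseyCycle (Nat.card V) e L ≤ c := by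
  set σ := Finite.equivFin V
  have hedges : (G.map σ.toEmbedding).edgeSet = Sym2.map σ '' G.edgeSet := edgeSet_map _ _
  refine Nat.sInf_le ⟨G.map σ.toEmbedding, ?_, χ ∘ Sym2.map σ.symm, ?_, fun v w hw hL => ?_⟩
  · rwa [hedges, Set.ncard_image_of_injective _ (Sym2.map.injective σ.injective)]
  · rw [hedges, Set.image_image]
    simpa [Sym2.map_map] using hχ
  · have := hrainbow (w.map (Iso.map σ G).symm.toHom) (hw.map (Iso.map σ G).symm.injective)
      (by rw [Walk.length_map, hL])
    rwa [Walk.edges_map, List.map_map] at this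

theorem maxAntiRamseyCycle_le_choose_two {V W : Type*} [Finite V] [Finite W] (G : SimpleGraph V)
    {φ : V → W} (hφ : ∀ ⦃u v⦄, G.Reachable u v → φ u = φ v → u = v) {e : ℕ}
    (he : e ≤ G.edgeSet.ncard) (L : ℕ) :
    maxAntiRamseyCycle (Nat.card V) e L ≤ (Nat.card W).choose 2 := by
  obtain ⟨f, hf⟩ := Countable.exists_injective_nat (Sym2 W)
  refine maxAntiRamseyCycle_le G (f ∘ Sym2.map φ) he ?_ fun v w hw _ => ?_
  · rw [Set.image_comp, Set.ncard_image_of_injective _ hf]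
    exact ncard_image_sym2Map_edgeSet_le fun u v huv => mt (hφ huv.reachable) huv.ne
  · rw [← List.map_map]
    exact (hw.isTrail.nodup_map_sym2Map_edges hφ).map hf

theorem maxAntiRamseyCycle_add_le_choose_two {m b e : ℕ} (hbm : b ≤ m)
    (he : e ≤ m.choose 2 + b.choose 2) (L : ℕ) :
    maxAntiRamseyCycle (m + b) e L ≤ m.choose 2 := by
  have hφ : ∀ ⦃u v⦄, (⊤ ⊕g ⊤ : SimpleGraph (Fin m ⊕ Fin b)).Reachable u v →
      Sum.elim id (Fin.castLE hbm) u = Sum.elim id (Fin.castLE hbm) v → u = v := by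
    rintro (u | u) (v | v) huv h
    · simpa using h
    · exact absurd huv (not_reachable_sum_inl_inr u v)
    · exact absurd huv.symm (not_reachable_sum_inl_inr v u)
    · simpa using h
  have hedges : (⊤ ⊕g ⊤ : SimpleGraph (Fin m ⊕ Fin b)).edgeSet.ncard
      = m.choose 2 + b.choose 2 := by
    simp only [ncard_edgeSet_sum, ncard_edgeSet_top, Fintype.card_fin]
  simpa using maxAntiRamseyCycle_le_choose_two _ hφ (he.trans_eq hedges.symm) L

theorem le_cast_choose_two_add_choose_two_sub {n m : ℕ} {x : ℝ} (hmn : m ≤ n) (hx : 0 ≤ x)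
    (hxm : n / 2 + x ≤ m) :
    (n : ℝ) ^ 2 / 4 + x ^ 2 - n / 2 ≤ ((m.choose 2 + (n - m).choose 2 : ℕ) : ℝ) := by
  have hsq : x ^ 2 ≤ ((m : ℝ) - n / 2) ^ 2 := pow_le_pow_left₀ hx (by linarith) 2
  push_cast [Nat.cast_choose_two, Nat.cast_sub hmn]
  linarith

theorem cast_choose_two_le_of_le_half_add_sqrt {m n : ℕ} {T ε : ℝ} (hε : 0 < ε)
    (hn : 16 / ε ^ 2 ≤ n) (hT : 0 ≤ T) (hTn : T ≤ n ^ 2 / 4) (hm : (m : ℝ) ≤ n / 2 + √T + √n + 1) :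
    (m.choose 2 : ℝ) ≤ (n ^ 2 / 4 + T) / 2 + n / 2 * √T + ε * n ^ 2 := by
  set s := √T
  set r := √(n : ℝ)
  have hs : s ^ 2 = T := Real.sq_sqrt hT
  have hr : r ^ 2 = n := Real.sq_sqrt n.cast_nonneg
  have hs0 : 0 ≤ s := Real.sqrt_nonneg T
  have hsn : s ≤ n / 2 := (Real.sqrt_le_left (by positivity)).mpr (by linarith)
  have hn1 : (1 : ℝ) ≤ n :=
    Nat.one_le_cast.mpr (Nat.cast_pos.mp ((by positivity : (0 : ℝ) < 16 / ε ^ 2).trans_le hn))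
  have hr1 : 1 ≤ r := Real.one_le_sqrt.mpr hn1
  have hεr : 4 ≤ ε * r := by
    refine le_of_pow_le_pow_left₀ two_ne_zero (by positivity) ?_
    rw [mul_pow, hr]
    linarith [(div_le_iff₀ (by positivity)).mp hn]
  have hchoose : (m.choose 2 : ℝ) ≤ (m : ℝ) ^ 2 / 2 := by
    rw [Nat.cast_choose_two]; nlinarith [m.cast_nonneg (α := ℝ)]
  have hm2 : (m : ℝ) ^ 2 ≤ (n / 2 + s + r + 1) ^ 2 := pow_le_pow_left₀ m.cast_nonneg hm 2
  have hcross : 2 * s * (r + 1) ≤ n * (r + 1) := by gcongr; linarith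
  have herr : (r + 1) ^ 2 + 2 * n * (r + 1) ≤ 2 * ε * n ^ 2 := by
    have h1 : (r + 1) ^ 2 + 2 * n * (r + 1) ≤ 8 * n * r := by nlinarith
    have h2 : 8 * n * r ≤ 2 * (ε * r) * n * r := by gcongr; linarith
    have h3 : 2 * (ε * r) * n * r = 2 * ε * n ^ 2 := by rw [← hr]; ring
    linarith
  have hexp : (n / 2 + s + r + 1) ^ 2
      = n ^ 2 / 4 + s ^ 2 + n * s + (r + 1) ^ 2 + n * (r + 1) + 2 * s * (r + 1) := by ring
  linarith

theorem exists_clique_sizes {n e : ℕ} {ε : ℝ} (hε : 0 < ε) (hn : 16 / ε ^ 2 ≤ n)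
    (he_lo : (n : ℝ) ^ 2 / 4 ≤ e) (he_hi : e ≤ n.choose 2) :
    ∃ m ≤ n, n - m ≤ m ∧ e ≤ m.choose 2 + (n - m).choose 2 ∧
      (m.choose 2 : ℝ) ≤ e / 2 + n / 2 * √(e - n ^ 2 / 4) + ε * n ^ 2 := by
  set T : ℝ := e - n ^ 2 / 4 with hT_def
  have hT : 0 ≤ T := sub_nonneg.mpr he_lo
  have hTn : T ≤ n ^ 2 / 4 := by
    have : (e : ℝ) ≤ n * (n - 1) / 2 := by
      rw [← Nat.cast_choose_two]; exact_mod_cast he_hi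
    linarith [n.cast_nonneg (α := ℝ)]
  set x : ℝ := n / 2 + √T + √n with hx_def
  have hx : x ≤ ⌈x⌉₊ := Nat.le_ceil x
  refine ⟨min n ⌈x⌉₊, min_le_left _ _, ?_, ?_, ?_⟩
  · have : (n : ℝ) ≤ 2 * ⌈x⌉₊ := by linarith [Real.sqrt_nonneg T, Real.sqrt_nonneg (n : ℝ)]
    have : n ≤ 2 * ⌈x⌉₊ := by exact_mod_cast this
    omega
  · rcases min_cases n ⌈x⌉₊ with ⟨hm, -⟩ | ⟨hm, hxn⟩
    · simpa [hm] using he_hi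
    · rw [hm]
      have hsplit := le_cast_choose_two_add_choose_two_sub hxn.le (x := √T + √n)
        (by positivity) (by linarith)
      have hsq : T + n ≤ (√T + √n) ^ 2 := by
        nlinarith [Real.sq_sqrt hT, Real.sq_sqrt (n.cast_nonneg (α := ℝ)), Real.sqrt_nonneg T,
          Real.sqrt_nonneg (n : ℝ)]
      exact_mod_cast (show (e : ℝ) ≤ ((⌈x⌉₊.choose 2 + (n - ⌈x⌉₊).choose 2 : ℕ) : ℝ) by
        linarith [n.cast_nonneg (α := ℝ)])
  · have hm : ((min n ⌈x⌉₊ : ℕ) : ℝ) ≤ n / 2 + √T + √n + 1 :=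
      (Nat.cast_le.mpr (min_le_right _ _)).trans (Nat.ceil_lt_add_one (by positivity)).le
    have := cast_choose_two_le_of_le_half_add_sqrt hε hn hT hTn hm
    rwa [show (n : ℝ) ^ 2 / 4 + T = e by ring] at this

theorem statement3_general (k : ℕ) (ε : ℝ) (hε : 0 < ε) :
    ∃ N : ℕ, ∀ n : ℕ, N ≤ n → ∀ e : ℕ, n ^ 2 / 4 + 1 ≤ e → e ≤ n * (n - 1) / 2 →
      (maxAntiRamseyCycle n e (2 * k + 1) : ℝ) ≤
        (e : ℝ) / 2 + (n : ℝ) / 2 * Real.sqrt ((e : ℝ) - (n : ℝ) ^ 2 / 4) + ε * n ^ 2 := by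
  refine ⟨⌈16 / ε ^ 2⌉₊, fun n hn e he_lo he_hi => ?_⟩
  have he_lo' : (n : ℝ) ^ 2 / 4 ≤ e := by
    have : (n : ℝ) ^ 2 ≤ 4 * e := by exact_mod_cast (by omega : n ^ 2 ≤ 4 * e)
    linarith
  obtain ⟨m, hmn, hbm, he, hcolors⟩ := exists_clique_sizes hε (Nat.ceil_le.mp hn) he_lo'
    (Nat.choose_two_right n ▸ he_hi)
  have hf := maxAntiRamseyCycle_add_le_choose_two hbm he (2 * k + 1)
  rw [Nat.add_sub_cancel' hmn] at hf
  exact (Nat.cast_le.mpr hf).trans hcolors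

/-- For every `k ≥ 4` and `ε > 0`, for all sufficiently large `n` and all
`⌊n²/4⌋ + 1 ≤ e ≤ n(n-1)/2`, we have `f(n, e, C_{2k+1}) ≤ e/2 + (n/2)·√(e - n²/4) + ε n²`. -/
theorem statement3 (k : ℕ) (hk : 4 ≤ k) (ε : ℝ) (hε : 0 < ε) :
    ∃ N : ℕ, ∀ n : ℕ, N ≤ n → ∀ e : ℕ, n ^ 2 / 4 + 1 ≤ e → e ≤ n * (n - 1) / 2 →
      (maxAntiRamseyCycle n e (2 * k + 1) : ℝ) ≤
        (e : ℝ) / 2 + (n : ℝ) / 2 * Real.sqrt ((e : ℝ) - (n : ℝ) ^ 2 / 4) + ε * n ^ 2 :=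
  statement3_general k ε hε
end

section
/- Let G be a simple graph with n vertices and e edges, where e > n²/4. Then G contains two adjacent vertices p and q with more than n/6 common neighbors. -/
/-!
Suppose every edge `uv` has codegree `c(uv) = |N(u) ∩ N(v)| ≤ n/6`. Since
`d(u) + d(v) ≤ n + c(uv)`, each ordered edge satisfies
`(n - 6 c(uv)) (n + 2 c(uv) - d(u) - d(v)) ≥ 0`. Summed over ordered edges, the terms in
`c(uv) (d(u) + d(v))` are controlled by summing the inclusion–exclusion bound
`d(u) + d(v) + d(w) ≤ n + c(uv) + c(uw) + c(vw)` over ordered triangles, and what is left is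
`∑ d(v)² ≤ e n`. Cauchy–Schwarz, `4 e² ≤ n ∑ d(v)²`, then gives `4 e ≤ n²`.
-/

open Finset

theorem Finset.card_add_card_add_card_le {α : Type*} [DecidableEq α] (A B C : Finset α) :
    #A + #B + #C ≤ #(A ∪ B ∪ C) + #(A ∩ B) + #(A ∩ C) + #(B ∩ C) := by
  have hAB := card_union_add_card_inter A B
  have hABC := card_union_add_card_inter (A ∪ B) C
  have hC : #((A ∪ B) ∩ C) ≤ #(A ∩ C) + #(B ∩ C) := by
    rw [union_inter_distrib_right]
    exact card_union_le _ _
  omega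

namespace SimpleGraph

variable {V : Type*} [Fintype V] (G : SimpleGraph V) [DecidableRel G.Adj]

def orderedTriangles : Finset (V × V × V) :=
  {t | G.Adj t.1 t.2.1 ∧ G.Adj t.1 t.2.2 ∧ G.Adj t.2.1 t.2.2}

theorem sum_orderedTriangles_rotate {M : Type*} [AddCommMonoid M] (f : V → V → V → M) :
    ∑ t ∈ G.orderedTriangles, f t.1 t.2.1 t.2.2 = ∑ t ∈ G.orderedTriangles, f t.2.1 t.2.2 t.1 := by
  refine sum_nbij' (fun t => (t.2.2, t.1, t.2.1)) (fun t => (t.2.1, t.2.2, t.1)) ?_ ?_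
    (fun _ _ => rfl) (fun _ _ => rfl) (fun _ _ => rfl) <;>
  · rintro ⟨u, v, w⟩
    simp only [orderedTriangles, mem_filter, mem_univ, true_and]
    grind [adj_comm]

theorem sum_sum_neighborFinset_degree :
    ∑ u, ∑ v ∈ G.neighborFinset u, G.degree v = ∑ v, G.degree v ^ 2 := by
  calc ∑ u, ∑ v ∈ G.neighborFinset u, G.degree v = ∑ v, ∑ _u ∈ G.neighborFinset v, G.degree v :=
        sum_comm' (by simp [adj_comm])
    _ = ∑ v, G.degree v ^ 2 := by simp [sq]

variable [DecidableEq V]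

def codegree (u v : V) : ℕ := #(G.neighborFinset u ∩ G.neighborFinset v)

theorem codegree_comm (u v : V) : G.codegree u v = G.codegree v u := by
  rw [codegree, codegree, inter_comm]

theorem ncard_neighborSet_inter_neighborSet (u v : V) :
    (G.neighborSet u ∩ G.neighborSet v).ncard = G.codegree u v := by
  rw [codegree, ← Set.ncard_coe_finset, coe_inter, coe_neighborFinset, coe_neighborFinset]

theorem degree_add_degree_le (u v : V) :
    G.degree u + G.degree v ≤ Fintype.card V + G.codegree u v := by
  have h := card_union_add_card_inter (G.neighborFinset u) (G.neighborFinset v)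
  have hV := card_le_univ (G.neighborFinset u ∪ G.neighborFinset v)
  simp only [card_neighborFinset_eq_degree] at h
  rw [codegree]
  omega

theorem degree_add_degree_add_degree_le (u v w : V) :
    G.degree u + G.degree v + G.degree w ≤
      Fintype.card V + G.codegree u v + G.codegree u w + G.codegree v w := by
  have h := card_add_card_add_card_le (G.neighborFinset u) (G.neighborFinset v)
    (G.neighborFinset w)
  have hV := card_le_univ (G.neighborFinset u ∪ G.neighborFinset v ∪ G.neighborFinset w)
  simp only [card_neighborFinset_eq_degree] at h
  simp only [codegree]
  omega

theorem sum_orderedTriangles {M : Type*} [AddCommMonoid M] (f : V → V → V → M) :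
    ∑ t ∈ G.orderedTriangles, f t.1 t.2.1 t.2.2 =
      ∑ u, ∑ v ∈ G.neighborFinset u, ∑ w ∈ G.neighborFinset u ∩ G.neighborFinset v, f u v w := by
  rw [sum_finset_product' _ univ
    (fun u => {p : V × V | G.Adj u p.1 ∧ G.Adj u p.2 ∧ G.Adj p.1 p.2}) (by simp [orderedTriangles])
    (f := fun u p => f u p.1 p.2)]
  refine sum_congr rfl fun u _ => sum_finset_product' _ _ _ fun p => ?_
  simp

theorem card_orderedTriangles :
    #G.orderedTriangles = ∑ u, ∑ v ∈ G.neighborFinset u, G.codegree u v := by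
  rw [card_eq_sum_ones, G.sum_orderedTriangles fun _ _ _ => 1]
  simp [codegree]

theorem sum_orderedTriangles_codegree :
    ∑ t ∈ G.orderedTriangles, G.codegree t.1 t.2.1 =
      ∑ u, ∑ v ∈ G.neighborFinset u, G.codegree u v ^ 2 := by
  rw [G.sum_orderedTriangles fun u v _ => G.codegree u v]
  simp [codegree, sq]

theorem two_mul_sum_orderedTriangles_degree :
    2 * ∑ t ∈ G.orderedTriangles, G.degree t.1 =
      ∑ u, ∑ v ∈ G.neighborFinset u, G.codegree u v * (G.degree u + G.degree v) := by
  have h := G.sum_orderedTriangles fun u v _ => G.degree u + G.degree v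
  simp only [sum_const, smul_eq_mul, sum_add_distrib] at h
  rw [two_mul]
  nth_rw 2 [G.sum_orderedTriangles_rotate fun u _ _ => G.degree u]
  rw [h]
  simp [codegree, mul_comm]

/-- The inclusion–exclusion bound summed over ordered triangles. -/
theorem three_mul_sum_codegree_mul_le :
    3 * ∑ u, ∑ v ∈ G.neighborFinset u, G.codegree u v * (G.degree u + G.degree v) ≤
      2 * Fintype.card V * ∑ u, ∑ v ∈ G.neighborFinset u, G.codegree u v +
        6 * ∑ u, ∑ v ∈ G.neighborFinset u, G.codegree u v ^ 2 := by
  have h := sum_le_sum fun (t : V × V × V) (_ : t ∈ G.orderedTriangles) =>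
    G.degree_add_degree_add_degree_le t.1 t.2.1 t.2.2
  simp only [sum_add_distrib, sum_const, smul_eq_mul] at h
  have hd₁ := G.sum_orderedTriangles_rotate fun u _ _ => G.degree u
  have hd₂ := G.sum_orderedTriangles_rotate fun _ v _ => G.degree v
  have hc₁ : ∑ t ∈ G.orderedTriangles, G.codegree t.1 t.2.2 =
      ∑ t ∈ G.orderedTriangles, G.codegree t.1 t.2.1 :=
    (sum_congr rfl fun t _ => G.codegree_comm _ _).trans
      (G.sum_orderedTriangles_rotate fun u _ w => G.codegree w u)
  have hc₂ := G.sum_orderedTriangles_rotate fun u v _ => G.codegree u v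
  rw [← G.two_mul_sum_orderedTriangles_degree, ← G.card_orderedTriangles,
    ← G.sum_orderedTriangles_codegree]
  linarith

/-- This is `(n - 6 c) (n + 2 c - d(u) - d(v)) ≥ 0` with both factors nonnegative. -/
theorem card_mul_degree_add_degree_le_of_codegree_le {u v : V}
    (huv : 6 * G.codegree u v ≤ Fintype.card V) :
    Fintype.card V * (G.degree u + G.degree v) + 4 * Fintype.card V * G.codegree u v +
        12 * G.codegree u v ^ 2 ≤
      Fintype.card V ^ 2 + 6 * (G.codegree u v * (G.degree u + G.degree v)) := by
  have hdeg := G.degree_add_degree_le u v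
  zify at huv hdeg ⊢
  nlinarith [mul_nonneg (sub_nonneg.2 huv) (by linarith : (0 : ℤ) ≤
    Fintype.card V + 2 * G.codegree u v - (G.degree u + G.degree v))]

theorem sum_degree_sq_le_of_codegree_le
    (h : ∀ u v, G.Adj u v → 6 * G.codegree u v ≤ Fintype.card V) :
    ∑ v, G.degree v ^ 2 ≤ #G.edgeFinset * Fintype.card V := by
  set n := Fintype.card V
  have hsum := sum_le_sum fun u (_ : u ∈ univ) => sum_le_sum fun v (hv : v ∈ G.neighborFinset u) =>
    G.card_mul_degree_add_degree_le_of_codegree_le (h u v ((G.mem_neighborFinset u v).1 hv))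
  simp only [sum_add_distrib, ← mul_sum, sum_const, card_neighborFinset_eq_degree,
    smul_eq_mul, ← sum_mul, sum_degrees_eq_twice_card_edges,
    sum_sum_neighborFinset_degree, ← sq] at hsum
  have htri := G.three_mul_sum_codegree_mul_le
  have hn : n * ∑ v, G.degree v ^ 2 ≤ n * (#G.edgeFinset * n) := by nlinarith
  rcases Nat.eq_zero_or_pos n with h0 | hpos
  · simp [n, Fintype.card_eq_zero_iff.1 h0]
  · exact Nat.le_of_mul_le_mul_left hn hpos

theorem four_mul_card_edgeFinset_le_of_codegree_le
    (h : ∀ u v, G.Adj u v → 6 * G.codegree u v ≤ Fintype.card V) :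
    4 * #G.edgeFinset ≤ Fintype.card V ^ 2 := by
  have hcs := sq_sum_le_card_mul_sum_sq (s := univ) (f := fun v => G.degree v)
  rw [card_univ, sum_degrees_eq_twice_card_edges] at hcs
  have hle := G.sum_degree_sq_le_of_codegree_le h
  rcases Nat.eq_zero_or_pos #G.edgeFinset with h0 | hpos
  · simp [h0]
  · refine Nat.le_of_mul_le_mul_left (c := #G.edgeFinset) ?_ hpos
    nlinarith

end SimpleGraph

/-- Let `G` be a simple graph with `n` vertices and `e > n²/4` edges. Then `G` contains two
adjacent vertices `p` and `q` with more than `n/6` common neighbors. -/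
theorem statement8 {V : Type} [Fintype V] (G : SimpleGraph V) (n e : ℕ)
    (hn : Fintype.card V = n) (he : G.edgeSet.ncard = e) (he' : (n : ℝ) ^ 2 / 4 < (e : ℝ)) :
    ∃ p q : V, G.Adj p q ∧ (n : ℝ) / 6 < ((G.neighborSet p ∩ G.neighborSet q).ncard : ℝ) := by
  classical
  by_contra! hsmall
  have hcodeg : ∀ u v, G.Adj u v → 6 * G.codegree u v ≤ Fintype.card V := by
    intro u v huv
    have h := hsmall u v huv
    rw [G.ncard_neighborSet_inter_neighborSet] at h
    rw [hn]
    exact_mod_cast (by linarith : (6 * G.codegree u v : ℝ) ≤ n)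
  have hedges := G.four_mul_card_edgeFinset_le_of_codegree_le hcodeg
  rw [← Set.ncard_coe_finset, G.coe_edgeFinset, he, hn] at hedges
  have : (4 * e : ℝ) ≤ n ^ 2 := by exact_mod_cast hedges
  linarith
end

section
/- Let k ≥ 4 be an integer and let G be a simple graph on m vertices whose minimum degree is at least m/2 + 5k. Then any two distinct edges of G lie on a common cycle of length 2k+1. -/
/-!
Two vertices of degree at least `m/2 + 5k` share at least `10k` neighbours. With that many common
neighbours, a path of any prescribed length `ℓ ≥ 2` between two vertices can be grown greedily
while avoiding a small forbidden set: step to a fresh neighbour, and finish through a fresh common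
neighbour. Two edges `ab`, `cd` are then closed into a cycle by a path from `b` to `c` (of length
`0` if `b = c`, else `2`) and a disjoint path from `d` to `a` of the remaining length.
-/

namespace SimpleGraph

open Finset

variable {V : Type*} {G : SimpleGraph V}

theorem Walk.isCycle_cons_append_cons {a b c d : V} (hab : G.Adj a b) (hcd : G.Adj c d)
    {P : G.Walk b c} {Q : G.Walk d a} (hP : P.IsPath) (hQ : Q.IsPath)
    (hPQ : P.support.Disjoint Q.support) (hQ₀ : 0 < Q.length) :
    ((Walk.cons hab P).append (Walk.cons hcd Q)).IsCycle := by
  refine Walk.IsPath.isCycle_append ?_ ?_ (by simpa using hPQ) (by simp [hQ₀])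
  · exact hP.cons fun ha ↦ hPQ ha Q.end_mem_support
  · exact hQ.cons fun hc ↦ hPQ P.end_mem_support hc

variable [Fintype V] [DecidableEq V] [DecidableRel G.Adj]

theorem degree_add_degree_le_card_add_card_inter_neighborFinset (u v : V) :
    G.degree u + G.degree v ≤ Fintype.card V + #(G.neighborFinset u ∩ G.neighborFinset v) := by
  rw [← card_neighborFinset_eq_degree, ← card_neighborFinset_eq_degree,
    ← card_union_add_card_inter]
  exact Nat.add_le_add_right (card_le_univ _) _

theorem exists_isPath_of_le_card_inter_neighborFinset {n : ℕ}
    (hcodeg : ∀ u v, n ≤ #(G.neighborFinset u ∩ G.neighborFinset v)) {ℓ : ℕ} (hℓ : 2 ≤ ℓ) :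
    ∀ {x y : V} {F : Finset V}, x ≠ y → x ∉ F → y ∉ F → #F + ℓ ≤ n + 1 →
      ∃ p : G.Walk x y, p.IsPath ∧ p.length = ℓ ∧ ∀ v ∈ p.support, v ∉ F := by
  induction ℓ, hℓ using Nat.le_induction with
  | base =>
    intro x y F hxy hx hy hF
    obtain ⟨z, hz, hzF⟩ := exists_mem_notMem_of_card_lt_card (s := F)
      (t := G.neighborFinset x ∩ G.neighborFinset y) (by linarith [hcodeg x y])
    simp only [mem_inter, mem_neighborFinset] at hz
    refine ⟨.cons hz.1 (.cons hz.2.symm .nil), ?_, rfl, ?_⟩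
    · simp [Walk.cons_isPath_iff, hz.1.ne, hz.2.ne.symm, hxy]
    · simp [hx, hy, hzF]
  | succ ℓ hℓ ih =>
    intro x y F hxy hx hy hF
    obtain ⟨z, hz, hzF⟩ := exists_mem_notMem_of_card_lt_card (s := insert y F)
      (t := G.neighborFinset x ∩ G.neighborFinset x)
      (by linarith [hcodeg x x, card_insert_le y F])
    simp only [inter_self, mem_neighborFinset] at hz
    simp only [mem_insert, not_or] at hzF
    obtain ⟨p, hp, hlen, hpF⟩ := ih (F := insert x F) hzF.1 (by simp [hz.ne.symm, hzF.2])
      (by simp [hxy.symm, hy]) (by linarith [card_insert_le x F])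
    refine ⟨.cons hz p, hp.cons fun hxp ↦ hpF x hxp (mem_insert_self x F), by simp [hlen], ?_⟩
    simp only [Walk.support_cons, List.mem_cons, forall_eq_or_imp]
    exact ⟨hx, fun v hv hvF ↦ hpF v hv (mem_insert_of_mem hvF)⟩

theorem exists_isCycle_mem_edges_of_adj_of_adj {n : ℕ}
    (hcodeg : ∀ u v, n ≤ #(G.neighborFinset u ∩ G.neighborFinset v))
    {L : ℕ} (hL : 4 ≤ L) (hLn : L ≤ n + 2)
    ⦃a b d : V⦄ (hab : G.Adj a b) (hbd : G.Adj b d) (had : a ≠ d) :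
    ∃ w : G.Walk a a, w.IsCycle ∧ w.length = L ∧ s(a, b) ∈ w.edges ∧ s(b, d) ∈ w.edges := by
  obtain ⟨Q, hQ, hQlen, hQb⟩ := exists_isPath_of_le_card_inter_neighborFinset hcodeg
    (ℓ := L - 2) (F := {b}) (by omega) had.symm (by simpa using hbd.ne.symm)
    (by simpa using hab.ne) (by simp; omega)
  refine ⟨(Walk.cons hab .nil).append (Walk.cons hbd Q),
    Walk.isCycle_cons_append_cons hab hbd Walk.IsPath.nil hQ ?_ (by omega), ?_, by simp, by simp⟩
  · simpa using fun hb ↦ hQb b hb (mem_singleton_self b)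
  · simp [hQlen]; omega

theorem exists_isCycle_mem_edges_of_adj_of_adj_of_ne {n : ℕ}
    (hcodeg : ∀ u v, n ≤ #(G.neighborFinset u ∩ G.neighborFinset v))
    {L : ℕ} (hL : 6 ≤ L) (hLn : L ≤ n + 2)
    {a b c d : V} (hab : G.Adj a b) (hcd : G.Adj c d)
    (hac : a ≠ c) (had : a ≠ d) (hbc : b ≠ c) (hbd : b ≠ d) :
    ∃ w : G.Walk a a, w.IsCycle ∧ w.length = L ∧ s(a, b) ∈ w.edges ∧ s(c, d) ∈ w.edges := by
  obtain ⟨P, hP, hPlen, hPad⟩ := exists_isPath_of_le_card_inter_neighborFinset hcodeg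
    (ℓ := 2) (F := {a, d}) le_rfl hbc (by simp [hab.ne.symm, hbd]) (by simp [hac.symm, hcd.ne])
    (by linarith [card_le_two (a := a) (b := d)])
  obtain ⟨Q, hQ, hQlen, hQP⟩ := exists_isPath_of_le_card_inter_neighborFinset hcodeg
    (ℓ := L - 4) (F := P.support.toFinset) (by omega) had.symm
    (by simpa using fun hd ↦ hPad d hd (by simp)) (by simpa using fun ha ↦ hPad a ha (by simp))
    (by have := List.toFinset_card_le P.support; rw [P.length_support] at this; omega)
  refine ⟨(Walk.cons hab P).append (Walk.cons hcd Q),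
    Walk.isCycle_cons_append_cons hab hcd hP hQ ?_ (by omega), ?_, by simp, by simp⟩
  · exact List.disjoint_right.mpr fun v hv hvP ↦ hQP v hv (List.mem_toFinset.mpr hvP)
  · simp [Walk.length_append, hPlen, hQlen]; omega

theorem exists_isCycle_length_eq_of_ne {n : ℕ}
    (hcodeg : ∀ u v, n ≤ #(G.neighborFinset u ∩ G.neighborFinset v))
    {L : ℕ} (hL : 6 ≤ L) (hLn : L ≤ n + 2)
    {e₁ e₂ : Sym2 V} (he₁ : e₁ ∈ G.edgeSet) (he₂ : e₂ ∈ G.edgeSet) (hne : e₁ ≠ e₂) :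
    ∃ (v : V) (w : G.Walk v v), w.IsCycle ∧ w.length = L ∧ e₁ ∈ w.edges ∧ e₂ ∈ w.edges := by
  induction e₁ using Sym2.ind with | _ a b =>
  induction e₂ using Sym2.ind with | _ c d =>
  rw [mem_edgeSet] at he₁ he₂
  have shared := exists_isCycle_mem_edges_of_adj_of_adj hcodeg (L := L) (by omega) hLn
  by_cases hbc : b = c
  · subst hbc
    obtain ⟨w, hw⟩ := shared he₁ he₂ (by rintro rfl; exact hne Sym2.eq_swap)
    exact ⟨a, w, hw⟩
  by_cases hbd : b = d
  · subst hbd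
    obtain ⟨w, hw, hlen, h₁, h₂⟩ := shared he₁ he₂.symm (by rintro rfl; exact hne rfl)
    exact ⟨a, w, hw, hlen, h₁, by rwa [Sym2.eq_swap]⟩
  by_cases hac : a = c
  · subst hac
    obtain ⟨w, hw, hlen, h₁, h₂⟩ := shared he₁.symm he₂ hbd
    exact ⟨b, w, hw, hlen, by rwa [Sym2.eq_swap], h₂⟩
  by_cases had : a = d
  · subst had
    obtain ⟨w, hw, hlen, h₁, h₂⟩ := shared he₁.symm he₂.symm hbc
    exact ⟨b, w, hw, hlen, by rwa [Sym2.eq_swap], by rwa [Sym2.eq_swap]⟩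
  obtain ⟨w, hw⟩ :=
    exists_isCycle_mem_edges_of_adj_of_adj_of_ne hcodeg hL hLn he₁ he₂ hac had hbc hbd
  exact ⟨a, w, hw⟩

end SimpleGraph

open SimpleGraph

/-- Let `k ≥ 4` and let `G` be a simple graph on `m` vertices whose minimum degree is at least
`m/2 + 5k`. Then any two distinct edges of `G` lie on a common cycle of length `2k+1`. -/
theorem statement9 {V : Type} [Fintype V] (G : SimpleGraph V) [DecidableRel G.Adj]
    (k m : ℕ) (hk : 4 ≤ k) (hm : Fintype.card V = m)
    (hδ : ∀ v : V, (m : ℝ) / 2 + 5 * (k : ℝ) ≤ (G.degree v : ℝ)) :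
    ∀ e₁ ∈ G.edgeSet, ∀ e₂ ∈ G.edgeSet, e₁ ≠ e₂ →
      ∃ (v : V) (w : G.Walk v v), w.IsCycle ∧ w.length = 2 * k + 1 ∧
        e₁ ∈ w.edges ∧ e₂ ∈ w.edges := by
  classical
  have hcodeg (u v : V) : 10 * k ≤ (G.neighborFinset u ∩ G.neighborFinset v).card := by
    have hsum : (m : ℝ) + 10 * k ≤ G.degree u + G.degree v := by linarith [hδ u, hδ v]
    have hsum' : m + 10 * k ≤ G.degree u + G.degree v := by exact_mod_cast hsum
    have hinter := G.degree_add_degree_le_card_add_card_inter_neighborFinset u v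
    omega
  exact fun e₁ he₁ e₂ he₂ hne ↦
    exists_isCycle_length_eq_of_ne hcodeg (by omega) (by omega) he₁ he₂ hne
end

section
/- Let k ≥ 4 be an integer and let G = (V, E) be a simple graph with minimum degree at least 2k satisfying: (i) for every vertex set T ⊆ V with |T| ≤ 2k − 4 and any two vertices u, v ∉ T, there is a path of length exactly 4 from u to v in G avoiding all vertices of T; and (ii) there is a vertex set A ⊆ V such that any two vertices of A are at distance at most 3 in G. Then any two distinct edges of G, each having at least one endpoint in A, lie on a common cycle of length 2k+1. -/
open SimpleGraph

/-! Pick endpoints `x ∈ e₁`, `y ∈ e₂` at minimum distance (at most `3`, since both edges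
meet `A`) and a shortest `x`–`y` path. By minimality it avoids the other endpoints `x'`, `y'`,
so `x' x ⋯ y y'` is a path of length at most `5` through both edges. The degree bound lets us
prepend fresh neighbours to the paths of length `4` given by (i), which yields paths of every
length `L ≥ 4` avoiding any `2k - L` vertices. Closing a path of length `ℓ ≤ 2k - 3` by such a
path of length `2k + 1 - ℓ` that avoids its interior gives a cycle of length `2k + 1`. -/

namespace SimpleGraph.Walk

variable {V : Type} {G : SimpleGraph V}

def IsShortestBetween (S T : Set V) {x y : V} (p : G.Walk x y) : Prop :=
  ∀ x' ∈ S, ∀ y' ∈ T, ∀ q : G.Walk x' y', p.length ≤ q.length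

section Shortest

variable {S T : Set V} {x y z : V} {p : G.Walk x y}

lemma exists_isPath_isShortestBetween {s t : V} (hs : s ∈ S) (ht : t ∈ T) (w : G.Walk s t) :
    ∃ x ∈ S, ∃ y ∈ T, ∃ p : G.Walk x y, p.IsPath ∧ p.IsShortestBetween S T := by
  classical
  have hex : ∃ n, ∃ x ∈ S, ∃ y ∈ T, ∃ p : G.Walk x y, p.length = n := ⟨_, s, hs, t, ht, w, rfl⟩
  obtain ⟨x, hx, y, hy, p, hp⟩ := Nat.find_spec hex
  refine ⟨x, hx, y, hy, p.bypass, p.bypass_isPath, fun x' hx' y' hy' q => ?_⟩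
  calc p.bypass.length ≤ p.length := p.length_bypass_le_length
    _ ≤ q.length := hp ▸ Nat.find_min' hex ⟨x', hx', y', hy', q, rfl⟩

lemma IsShortestBetween.eq_start_of_mem_support (hp : p.IsShortestBetween S T) (hy : y ∈ T)
    (hz : z ∈ p.support) (hzS : z ∈ S) : z = x := by
  classical
  have hsplit := congrArg length (p.take_spec hz)
  have hdrop := hp z hzS y hy (p.dropUntil z hz)
  rw [length_append] at hsplit
  exact ((p.takeUntil z hz).eq_of_length_eq_zero (by omega)).symm

lemma IsShortestBetween.eq_end_of_mem_support (hp : p.IsShortestBetween S T) (hx : x ∈ S)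
    (hz : z ∈ p.support) (hzT : z ∈ T) : z = y := by
  classical
  have hsplit := congrArg length (p.take_spec hz)
  have htake := hp x hx z hzT (p.takeUntil z hz)
  rw [length_append] at hsplit
  exact (p.dropUntil z hz).eq_of_length_eq_zero (by omega)

end Shortest

lemma IsPath.start_notMem_support_tail {x y : V} {p : G.Walk x y} (hp : p.IsPath) :
    x ∉ p.support.tail := by
  have := hp.support_nodup
  rw [← p.cons_tail_support, List.nodup_cons] at this
  exact this.1

lemma exists_isPath_mem_edges {e₁ e₂ : Sym2 V} (he₁ : e₁ ∈ G.edgeSet) (he₂ : e₂ ∈ G.edgeSet)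
    (hne : e₁ ≠ e₂) {s t : V} (hs : s ∈ e₁) (ht : t ∈ e₂) (w : G.Walk s t) :
    ∃ (u v : V) (P : G.Walk u v), P.IsPath ∧ 2 ≤ P.length ∧ P.length ≤ w.length + 2 ∧
      e₁ ∈ P.edges ∧ e₂ ∈ P.edges := by
  obtain ⟨x, hx, y, hy, p, hp, hshort⟩ :=
    exists_isPath_isShortestBetween (S := {v | v ∈ e₁}) (T := {v | v ∈ e₂}) hs ht w
  obtain ⟨x', rfl⟩ : ∃ x', s(x, x') = e₁ := ⟨_, Sym2.other_spec hx⟩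
  obtain ⟨y', rfl⟩ : ∃ y', s(y, y') = e₂ := ⟨_, Sym2.other_spec hy⟩
  rw [SimpleGraph.mem_edgeSet] at he₁ he₂
  have hx' : x' ∉ p.support := fun h =>
    he₁.ne (hshort.eq_start_of_mem_support hy h (Sym2.mem_mk_right x x')).symm
  have hy' : y' ∉ p.support := fun h =>
    he₂.ne (hshort.eq_end_of_mem_support hx h (Sym2.mem_mk_right y y')).symm
  have hx'y' : x' ≠ y' := by
    rintro rfl
    have hlen := hshort x' (Sym2.mem_mk_right x x') x' (Sym2.mem_mk_right y x') nil
    obtain rfl := p.eq_of_length_eq_zero (Nat.le_zero.mp hlen)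
    exact hne rfl
  refine ⟨x', y', (p.concat he₂).cons he₁.symm, ?_, ?_, ?_, ?_, ?_⟩
  · exact (hp.concat hy' he₂).cons (by simp [support_concat, hx', hx'y'])
  · simp
  · simpa using hshort s hs t ht w
  · simp [Sym2.eq_swap]
  · simp [edges_concat]

end SimpleGraph.Walk

namespace SimpleGraph

variable {V : Type} [Fintype V] {G : SimpleGraph V} [DecidableRel G.Adj] {D m : ℕ}

lemma exists_isPath_length_avoiding (hm : 0 < m) (hδ : ∀ v, D ≤ G.degree v)
    (hpaths : ∀ T : Finset V, T.card ≤ D - m → ∀ u v : V, u ∉ T → v ∉ T → u ≠ v →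
      ∃ p : G.Walk u v, p.IsPath ∧ p.length = m ∧ ∀ z ∈ p.support, z ∉ T)
    {L : ℕ} (hL : m ≤ L) {T : Finset V} {u v : V} (hcard : T.card + L ≤ D)
    (hu : u ∉ T) (hv : v ∉ T) (huv : u ≠ v) :
    ∃ p : G.Walk u v, p.IsPath ∧ p.length = L ∧ ∀ z ∈ p.support, z ∉ T := by
  classical
  induction L, hL using Nat.le_induction generalizing T u with
  | base => exact hpaths T (by omega) u v hu hv huv
  | succ L hL ih =>
    obtain ⟨u', hu'N, hu'vT⟩ : ∃ u' ∈ G.neighborFinset u, u' ∉ insert v T := by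
      refine Finset.exists_mem_notMem_of_card_lt_card ?_
      have := Finset.card_insert_le v T
      have := hδ u
      rw [card_neighborFinset_eq_degree]
      omega
    rw [mem_neighborFinset] at hu'N
    rw [Finset.mem_insert, not_or] at hu'vT
    obtain ⟨p, hp, hplen, hpT⟩ := ih (T := insert u T) (u := u')
      (by have := Finset.card_insert_le u T; omega)
      (by simp [hu'N.ne', hu'vT.2]) (by simp [huv.symm, hv]) hu'vT.1
    refine ⟨p.cons hu'N, hp.cons fun h => hpT u h (Finset.mem_insert_self u T), by simp [hplen], ?_⟩
    simp only [Walk.support_cons, List.mem_cons, forall_eq_or_imp]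
    exact ⟨hu, fun z hz hzT => hpT z hz (Finset.mem_insert_of_mem hzT)⟩

lemma exists_isCycle_edges_subset (hm : 0 < m) (hδ : ∀ v, D ≤ G.degree v)
    (hpaths : ∀ T : Finset V, T.card ≤ D - m → ∀ u v : V, u ∉ T → v ∉ T → u ≠ v →
      ∃ p : G.Walk u v, p.IsPath ∧ p.length = m ∧ ∀ z ∈ p.support, z ∉ T)
    {x y : V} {W : G.Walk x y} (hW : W.IsPath) (h2 : 2 ≤ W.length)
    (hlen : W.length + m ≤ D + 1) :
    ∃ c : G.Walk x x, c.IsCycle ∧ c.length = D + 1 ∧ W.edges ⊆ c.edges := by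
  classical
  have hyW : y ∈ W.support.tail :=
    Walk.end_mem_tail_support (Walk.not_nil_iff_lt_length.2 (by omega))
  have hxW : x ∉ W.support.tail := hW.start_notMem_support_tail
  set T := W.support.tail.toFinset.erase y
  have hTcard : T.card + 1 = W.length := by
    rw [Finset.card_erase_of_mem (List.mem_toFinset.2 hyW),
      List.toFinset_card_of_nodup hW.support_nodup.tail, List.length_tail, Walk.length_support]
    omega
  obtain ⟨q, hq, hqlen, hqT⟩ := exists_isPath_length_avoiding hm hδ hpaths
    (L := D + 1 - W.length) (T := T) (u := y) (v := x) (by omega) (by omega)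
    (Finset.notMem_erase y _) (fun h => hxW (List.mem_toFinset.1 (Finset.mem_of_mem_erase h)))
    (fun h => hxW (h ▸ hyW))
  refine ⟨W.append q, hW.isCycle_append hq ?_ (by omega), by simp [hqlen]; omega,
    by simp [Walk.edges_append]⟩
  intro z hzW hzq
  have hzy : z ≠ y := fun h => hq.start_notMem_support_tail (h ▸ hzq)
  exact hqT z (List.mem_of_mem_tail hzq) (Finset.mem_erase.2 ⟨hzy, List.mem_toFinset.2 hzW⟩)

end SimpleGraph

/-- Let `k ≥ 4` and let `G` be a simple graph with minimum degree at least `2k` such that: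
(i) for every vertex set `T` with `|T| ≤ 2k - 4` and any two vertices `u, v ∉ T` there is a
path of length exactly `4` from `u` to `v` avoiding `T`; and (ii) there is a vertex set `A`
any two of whose vertices are at distance at most `3` in `G`. Then any two distinct edges of
`G`, each having an endpoint in `A`, lie on a common cycle of length `2k+1`. -/
theorem statement11 {V : Type} [Fintype V] (G : SimpleGraph V) [DecidableRel G.Adj]
    (k : ℕ) (hk : 4 ≤ k) (hδ : ∀ v : V, 2 * k ≤ G.degree v)
    (h4 : ∀ T : Finset V, T.card ≤ 2 * k - 4 → ∀ u v : V, u ∉ T → v ∉ T → u ≠ v →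
      ∃ p : G.Walk u v, p.IsPath ∧ p.length = 4 ∧ ∀ z ∈ p.support, z ∉ T)
    (A : Set V) (hA : ∀ x ∈ A, ∀ y ∈ A, ∃ w : G.Walk x y, w.length ≤ 3) :
    ∀ e₁ ∈ G.edgeSet, ∀ e₂ ∈ G.edgeSet, e₁ ≠ e₂ →
      (∃ a ∈ e₁, a ∈ A) → (∃ a ∈ e₂, a ∈ A) →
      ∃ (v : V) (w : G.Walk v v), w.IsCycle ∧ w.length = 2 * k + 1 ∧
        e₁ ∈ w.edges ∧ e₂ ∈ w.edges := by
  rintro e₁ he₁ e₂ he₂ hne ⟨a, ha, haA⟩ ⟨c, hc, hcA⟩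
  obtain ⟨w, hw⟩ := hA a haA c hcA
  obtain ⟨u, v, P, hP, hP₂, hPw, h₁, h₂⟩ := Walk.exists_isPath_mem_edges he₁ he₂ hne ha hc w
  obtain ⟨C, hC, hClen, hCP⟩ :=
    exists_isCycle_edges_subset (by norm_num) hδ h4 hP hP₂ (by omega)
  exact ⟨u, C, hC, hClen, hCP h₁, hCP h₂⟩
end

section
/- Let k ≥ 4 be an integer, let 0 < ε < 0.01 be a real number, and let n ≥ 2k·ε^{−13}. Let G = (V, E) be a simple graph with n vertices and e edges, where n²/4 < e < (1/4 + ε⁶)·n², whose minimum degree δ satisfies δ > n/2 − ε³·n − 1/2, equipped with an edge-coloring in which every cycle of length 2k+1 in G is rainbow. Let S ⊆ V be a vertex set with |S| ≤ 5k. Then either any two vertices x, y ∈ V \ S are connected in G by a path P of length 2 or 3 such that no vertex of S lies on P, or the number of colors used by the edge-coloring is at least e/2 + (n/2)·√(e − n²/4) − ε·n². -/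
/-!
Suppose `x, y ∉ S` are joined by no path of length 2 or 3 avoiding `S`. Put `T = S ∪ {x, y}` and
let `A`, `B` be the neighbourhoods of `x` and `y` outside `T`: they are disjoint with no edges
between them. By the minimum-degree bound both have about `n / 2` vertices, only `O(ε³n + k)`
vertices lie outside `A ∪ B`, and every vertex of `A` misses only `O(ε³n + k)` vertices of `A`
(likewise for `B`). In such a near-clique any two vertices are joined by paths of every length
`≥ 2`, so any two edges inside `A` lie on a common `(2k+1)`-cycle and get distinct colours. Hence
there are at least `max(e(A), e(B)) ≥ (e - n·|V \ (A ∪ B)|) / 2` colours, which beats the bound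
because `√(e - n²/4) ≤ ε³n`.
-/

open Finset

namespace SimpleGraph

theorem Walk.isCycle_cons_cons {V : Type*} {G : SimpleGraph V} {u v w : V} {hvw : G.Adj v w}
    {p : G.Walk w u} (hp : (Walk.cons hvw p).IsPath) (hwu : w ≠ u) {huv : G.Adj u v} :
    (Walk.cons huv (Walk.cons hvw p)).IsCycle := by
  refine (Walk.cons_isCycle_iff _ _).2 ⟨hp, fun he => ?_⟩
  rw [Walk.edges_cons, List.mem_cons] at he
  rcases he with he | he
  · rcases Sym2.eq_iff.1 he with ⟨huv', -⟩ | ⟨huw, -⟩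
    · exact huv.ne huv'
    · exact hwu huw.symm
  · exact (Walk.cons_isPath_iff _ _).1 hp |>.2 (p.snd_mem_support_of_mem_edges he)

variable {V : Type*} [Fintype V] [DecidableEq V] {G : SimpleGraph V} [DecidableRel G.Adj]

-- `a` itself is counted among its non-neighbours in `C`.
def IsNearClique (G : SimpleGraph V) [DecidableRel G.Adj] (C : Finset V) (d : ℕ) : Prop :=
  ∀ a ∈ C, #(C \ G.neighborFinset a) ≤ d

namespace IsNearClique

variable {C D F : Finset V} {d ℓ : ℕ} {u v : V}

theorem mono (h : G.IsNearClique C d) (hDC : D ⊆ C) : G.IsNearClique D d :=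
  fun a ha => (card_le_card (sdiff_subset_sdiff hDC le_rfl)).trans (h a (hDC ha))

theorem exists_adj (h : G.IsNearClique C d) (hu : u ∈ C) (hF : #F + d < #C) :
    ∃ w ∈ C, w ∉ F ∧ G.Adj u w := by
  obtain ⟨w, hwC, hw⟩ := exists_mem_notMem_of_card_lt_card (s := F ∪ (C \ G.neighborFinset u))
    ((card_union_le _ _).trans_lt (by linarith [h u hu]))
  simp only [mem_union, mem_sdiff, mem_neighborFinset, not_or, not_and, not_not] at hw
  exact ⟨w, hwC, hw.1, hw.2 hwC⟩

theorem exists_adj_adj (h : G.IsNearClique C d) (hu : u ∈ C) (hv : v ∈ C)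
    (hF : #F + 2 * d < #C) : ∃ w ∈ C, w ∉ F ∧ G.Adj u w ∧ G.Adj w v := by
  have hcard : #(F ∪ (C \ G.neighborFinset v)) + d < #C := by
    linarith [card_union_le F (C \ G.neighborFinset v), h v hv]
  obtain ⟨w, hwC, hw, huw⟩ := h.exists_adj hu hcard
  simp only [mem_union, mem_sdiff, mem_neighborFinset, not_or, not_and, not_not] at hw
  exact ⟨w, hwC, hw.1, huw, (hw.2 hwC).symm⟩

theorem exists_path (h : G.IsNearClique C d) (hℓ : 2 ≤ ℓ) (hu : u ∈ C) (hv : v ∈ C)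
    (huv : u ≠ v) (hcard : 2 * d + ℓ + 1 ≤ #C) :
    ∃ p : G.Walk u v, p.IsPath ∧ p.length = ℓ ∧ ∀ z ∈ p.support, z ∈ C := by
  induction ℓ, hℓ using Nat.le_induction generalizing C u with
  | base =>
    obtain ⟨w, hwC, hw, huw, hwv⟩ := h.exists_adj_adj (F := {u, v}) hu hv
      (by linarith [card_le_two (a := u) (b := v)])
    simp only [mem_insert, mem_singleton, not_or] at hw
    refine ⟨.cons huw (.cons hwv .nil), ?_, rfl, ?_⟩
    · simp [Walk.cons_isPath_iff, huv, hw.2, Ne.symm hw.1]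
    · simp only [Walk.support_cons, Walk.support_nil, List.mem_cons, List.not_mem_nil, or_false]
      rintro z (rfl | rfl | rfl) <;> assumption
  | succ ℓ hℓ ih =>
    obtain ⟨w, hwC, hw, huw⟩ := h.exists_adj (F := {u, v}) hu
      (by linarith [card_le_two (a := u) (b := v)])
    simp only [mem_insert, mem_singleton, not_or] at hw
    obtain ⟨p, hp, hlen, hsupp⟩ := ih (h.mono (erase_subset u C)) (mem_erase.2 ⟨hw.1, hwC⟩)
      (mem_erase.2 ⟨huv.symm, hv⟩) hw.2 (by rw [card_erase_of_mem hu]; omega)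
    refine ⟨.cons huw p, hp.cons fun hup => (mem_erase.1 (hsupp u hup)).1 rfl,
      by simp [hlen], ?_⟩
    simp only [Walk.support_cons, List.mem_cons]
    rintro z (rfl | hz)
    exacts [hu, mem_of_mem_erase (hsupp z hz)]

theorem exists_cycle_mem_edges_of_adj_adj (h : G.IsNearClique C d) (hℓ : 4 ≤ ℓ)
    (hcard : 2 * d + ℓ ≤ #C) {a b : V} (hva : G.Adj v a) (hvb : G.Adj v b) (hab : a ≠ b)
    (ha : a ∈ C) (hv : v ∈ C) (hb : b ∈ C) :
    ∃ c : G.Walk a a, c.IsCycle ∧ c.length = ℓ ∧ s(v, a) ∈ c.edges ∧ s(v, b) ∈ c.edges := by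
  obtain ⟨p, hp, hlen, hsupp⟩ := (h.mono (erase_subset v C)).exists_path (ℓ := ℓ - 2) (by omega)
    (mem_erase.2 ⟨hvb.ne', hb⟩) (mem_erase.2 ⟨hva.ne', ha⟩) hab.symm
    (by rw [card_erase_of_mem hv]; omega)
  have hvp : v ∉ p.support := fun hvp => (mem_erase.1 (hsupp v hvp)).1 rfl
  refine ⟨.cons hva.symm (.cons hvb p), Walk.isCycle_cons_cons (hp.cons hvp) hab.symm,
    by simp [hlen]; omega, by simp [Sym2.eq_swap], by simp⟩

theorem exists_cycle_mem_edges_of_disjoint (h : G.IsNearClique C d) (hℓ : 6 ≤ ℓ)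
    (hcard : 2 * d + ℓ ≤ #C) {a b x y : V} (hab : G.Adj a b) (hxy : G.Adj x y)
    (hax : a ≠ x) (hay : a ≠ y) (hbx : b ≠ x) (hby : b ≠ y) (ha : a ∈ C) (hb : b ∈ C)
    (hx : x ∈ C) (hy : y ∈ C) :
    ∃ c : G.Walk a a, c.IsCycle ∧ c.length = ℓ ∧ s(a, b) ∈ c.edges ∧ s(x, y) ∈ c.edges := by
  obtain ⟨p, hp, hlen, hsupp⟩ := (h.mono (sdiff_subset (t := {b, x}))).exists_path (ℓ := ℓ - 4)
    (by omega) (by simp [hy, hby.symm, hxy.ne']) (by simp [ha, hab.ne, hax]) hay.symm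
    (by have := le_card_sdiff {b, x} C; have := card_le_two (a := b) (b := x); omega)
  have hxp : x ∉ p.support := fun h => by simpa using hsupp x h
  have hbp : b ∉ p.support := fun h => by simpa using hsupp b h
  -- the cycle is `a → b → w → x → y ⇝ a`, with `w` a common neighbour of `b` and `x` off `y ⇝ a`
  have hq := hp.cons hxp (h := hxy)
  obtain ⟨w, hwC, hw, hbw, hwx⟩ := h.exists_adj_adj hb hx
    (F := insert b (Walk.cons hxy p).support.toFinset) (by
      have := card_insert_le b (Walk.cons hxy p).support.toFinset
      have := (Walk.cons hxy p).support.toFinset_card_le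
      simp only [Walk.length_support, Walk.length_cons] at *
      omega)
  simp only [mem_insert, List.mem_toFinset, not_or] at hw
  refine ⟨.cons hab (.cons hbw (.cons hwx (.cons hxy p))),
    Walk.isCycle_cons_cons ((hq.cons hw.2).cons ?_) ?_, by simp [hlen]; omega, by simp, by simp⟩
  · simp [hbw.ne, hbx, hbp]
  · rintro rfl
    exact hw.2 (Walk.end_mem_support _)

theorem exists_cycle_mem_edges (h : G.IsNearClique C d) (hℓ : 6 ≤ ℓ) (hcard : 2 * d + ℓ ≤ #C)
    {e e' : Sym2 V} (he : e ∈ G.edgeFinset ∩ C.sym2) (he' : e' ∈ G.edgeFinset ∩ C.sym2)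
    (hne : e ≠ e') :
    ∃ (u : V) (c : G.Walk u u), c.IsCycle ∧ c.length = ℓ ∧ e ∈ c.edges ∧ e' ∈ c.edges := by
  by_cases hshare : ∃ v, v ∈ e ∧ v ∈ e'
  · obtain ⟨v, hv, hv'⟩ := hshare
    obtain ⟨a, rfl⟩ := Sym2.mem_iff_exists.1 hv
    obtain ⟨b, rfl⟩ := Sym2.mem_iff_exists.1 hv'
    simp only [mem_inter, mem_edgeFinset, mem_edgeSet, mk_mem_sym2_iff] at he he'
    exact ⟨a, h.exists_cycle_mem_edges_of_adj_adj (by omega) hcard he.1 he'.1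
      (by rintro rfl; exact hne rfl) he.2.2 he.2.1 he'.2.2⟩
  · induction e using Sym2.ind with | _ a b => ?_
    induction e' using Sym2.ind with | _ x y => ?_
    simp only [mem_inter, mem_edgeFinset, mem_edgeSet, mk_mem_sym2_iff] at he he'
    simp only [Sym2.mem_iff, not_exists, not_and, not_or] at hshare
    exact ⟨a, h.exists_cycle_mem_edges_of_disjoint hℓ hcard he.1 he'.1 (hshare a (.inl rfl)).1
      (hshare a (.inl rfl)).2 (hshare b (.inr rfl)).1 (hshare b (.inr rfl)).2 he.2.1 he.2.2
      he'.2.1 he'.2.2⟩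

theorem card_edges_le_card_colors {α : Type*} [DecidableEq α] (h : G.IsNearClique C d)
    (hℓ : 6 ≤ ℓ) (hcard : 2 * d + ℓ ≤ #C) (χ : Sym2 V → α)
    (hχ : ∀ ⦃v : V⦄ (c : G.Walk v v), c.IsCycle → c.length = ℓ → (c.edges.map χ).Nodup) :
    #(G.edgeFinset ∩ C.sym2) ≤ #(G.edgeFinset.image χ) := by
  have hinj : Set.InjOn χ (G.edgeFinset ∩ C.sym2 : Finset (Sym2 V)) := by
    intro e he e' he' hχe
    by_contra hne
    obtain ⟨u, c, hc, hlen, hmem, hmem'⟩ := h.exists_cycle_mem_edges hℓ hcard he he' hne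
    exact hne (List.inj_on_of_nodup_map (hχ c hc hlen) hmem hmem' hχe)
  calc #(G.edgeFinset ∩ C.sym2) = #((G.edgeFinset ∩ C.sym2).image χ) :=
        (card_image_of_injOn hinj).symm
    _ ≤ #(G.edgeFinset.image χ) := card_le_card (image_subset_image inter_subset_left)

end IsNearClique

variable {A B : Finset V}

theorem card_sdiff_neighborFinset_add_degree_add_card_le (hAB : Disjoint A B) {a : V}
    (ha : ∀ b ∈ B, ¬G.Adj a b) :
    #(A \ G.neighborFinset a) + G.degree a + #B ≤ Fintype.card V := by
  have hdisj : Disjoint (A ∪ G.neighborFinset a) B := disjoint_union_left.2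
    ⟨hAB, Finset.disjoint_left.2 fun b hb hbB => ha b hbB ((mem_neighborFinset ..).1 hb)⟩
  rw [← card_neighborFinset_eq_degree, card_sdiff_add_card, ← card_union_of_disjoint hdisj]
  exact card_le_univ _

theorem isNearClique_of_forall_not_adj (hAB : Disjoint A B)
    (hnoadj : ∀ a ∈ A, ∀ b ∈ B, ¬G.Adj a b) {δ t : ℕ} (hδ : ∀ v, δ ≤ G.degree v)
    (hB : δ ≤ #B + t) : G.IsNearClique A (Fintype.card V + t - 2 * δ) := fun a ha => by
  have := card_sdiff_neighborFinset_add_degree_add_card_le hAB (hnoadj a ha)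
  have := hδ a
  omega

theorem card_edgeFinset_le_of_forall_not_adj (hnoadj : ∀ a ∈ A, ∀ b ∈ B, ¬G.Adj a b) :
    #G.edgeFinset ≤
      #(G.edgeFinset ∩ A.sym2) + #(G.edgeFinset ∩ B.sym2) + #(A ∪ B)ᶜ * Fintype.card V := by
  have hcover : G.edgeFinset ⊆ (G.edgeFinset ∩ A.sym2) ∪ (G.edgeFinset ∩ B.sym2) ∪
      (A ∪ B)ᶜ.biUnion fun v => G.incidenceFinset v := by
    intro e he
    induction e using Sym2.ind with | _ u v => ?_
    have huv : G.Adj u v := mem_edgeFinset.1 he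
    have hR : ∀ w ∈ s(u, v), w ∉ A ∪ B →
        s(u, v) ∈ (A ∪ B)ᶜ.biUnion fun v => G.incidenceFinset v :=
      fun w hw hwAB => mem_biUnion.2 ⟨w, mem_compl.2 hwAB, (mem_incidenceFinset ..).2 ⟨huv, hw⟩⟩
    by_cases hu : u ∈ A ∪ B
    swap; · exact mem_union_right _ (hR u (Sym2.mem_mk_left u v) hu)
    by_cases hv : v ∈ A ∪ B
    swap; · exact mem_union_right _ (hR v (Sym2.mem_mk_right u v) hv)
    refine mem_union_left _ ?_
    rcases mem_union.1 hu with hu | hu <;> rcases mem_union.1 hv with hv | hv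
    · exact mem_union_left _ (mem_inter.2 ⟨he, mk_mem_sym2_iff.2 ⟨hu, hv⟩⟩)
    · exact absurd huv (hnoadj u hu v hv)
    · exact absurd huv.symm (hnoadj v hv u hu)
    · exact mem_union_right _ (mem_inter.2 ⟨he, mk_mem_sym2_iff.2 ⟨hu, hv⟩⟩)
  calc #G.edgeFinset
      ≤ #(G.edgeFinset ∩ A.sym2) + #(G.edgeFinset ∩ B.sym2) +
          #((A ∪ B)ᶜ.biUnion fun v => G.incidenceFinset v) :=
        (card_le_card hcover).trans
          ((card_union_le _ _).trans (add_le_add_left (card_union_le _ _) _))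
    _ ≤ #(G.edgeFinset ∩ A.sym2) + #(G.edgeFinset ∩ B.sym2) + #(A ∪ B)ᶜ * Fintype.card V := by
        gcongr
        refine card_biUnion_le.trans (sum_le_card_nsmul _ _ _ fun v _ => ?_)
        rw [card_incidenceFinset_eq_degree]
        exact (G.degree_lt_card_verts v).le

theorem card_edgeFinset_add_le_card_colors [Nonempty V] {α : Type*} [DecidableEq α] {ℓ δ t : ℕ}
    (hℓ : 6 ≤ ℓ) (χ : Sym2 V → α)
    (hχ : ∀ ⦃v : V⦄ (c : G.Walk v v), c.IsCycle → c.length = ℓ → (c.edges.map χ).Nodup)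
    (hAB : Disjoint A B) (hnoadj : ∀ a ∈ A, ∀ b ∈ B, ¬G.Adj a b) (hδ : ∀ v, δ ≤ G.degree v)
    (hA : δ ≤ #A + t) (hB : δ ≤ #B + t) (hsize : 2 * Fintype.card V + 3 * t + ℓ ≤ 5 * δ) :
    #G.edgeFinset + 2 * δ * Fintype.card V ≤
      2 * #(G.edgeFinset.image χ) + (Fintype.card V + 2 * t) * Fintype.card V := by
  set n := Fintype.card V
  have hnoadj' : ∀ b ∈ B, ∀ a ∈ A, ¬G.Adj b a := fun b hb a ha hba => hnoadj a ha b hb hba.symm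
  have hδn : δ < n := (hδ (Classical.arbitrary V)).trans_lt (G.degree_lt_card_verts _)
  have hBn : δ + #B ≤ n := by
    obtain ⟨a, ha⟩ : A.Nonempty := card_pos.1 (by omega)
    linarith [card_sdiff_neighborFinset_add_degree_add_card_le hAB (hnoadj a ha), hδ a]
  have hAn : δ + #A ≤ n := by
    obtain ⟨b, hb⟩ : B.Nonempty := card_pos.1 (by omega)
    linarith [card_sdiff_neighborFinset_add_degree_add_card_le hAB.symm (hnoadj' b hb), hδ b]
  have hcolA := (isNearClique_of_forall_not_adj hAB hnoadj hδ hB).card_edges_le_card_colors hℓ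
    (by omega) χ hχ
  have hcolB := (isNearClique_of_forall_not_adj hAB.symm hnoadj' hδ hA).card_edges_le_card_colors
    hℓ (by omega) χ hχ
  have hR : #(A ∪ B)ᶜ + 2 * δ ≤ n + 2 * t := by
    have := card_le_univ (A ∪ B)
    rw [card_compl, card_union_of_disjoint hAB] at *
    omega
  calc #G.edgeFinset + 2 * δ * n
      ≤ 2 * #(G.edgeFinset.image χ) + (#(A ∪ B)ᶜ + 2 * δ) * n := by
        linarith [card_edgeFinset_le_of_forall_not_adj hnoadj]
    _ ≤ 2 * #(G.edgeFinset.image χ) + (n + 2 * t) * n := by gcongr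

theorem disjoint_and_forall_not_adj_of_short_paths_meet {x y : V} {S : Finset V} (hx : x ∉ S)
    (hy : y ∉ S) (hxy : x ≠ y)
    (hP : ∀ p : G.Walk x y, p.IsPath → p.length = 2 ∨ p.length = 3 → ∃ z ∈ p.support, z ∈ S) :
    Disjoint (G.neighborFinset x \ insert x (insert y S))
        (G.neighborFinset y \ insert x (insert y S)) ∧
      ∀ a ∈ G.neighborFinset x \ insert x (insert y S),
        ∀ b ∈ G.neighborFinset y \ insert x (insert y S), ¬G.Adj a b := by
  simp only [Finset.disjoint_left, mem_sdiff, mem_neighborFinset, mem_insert, not_or]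
  constructor
  · rintro z ⟨hxz, hzx, hzy, hzS⟩ ⟨hyz, -⟩
    obtain ⟨w, hw, hwS⟩ := hP (.cons hxz (.cons hyz.symm .nil))
      (by simp [Walk.cons_isPath_iff, hxy, Ne.symm hzx, hzy]) (.inl rfl)
    simp only [Walk.support_cons, Walk.support_nil, List.mem_cons, List.not_mem_nil,
      or_false] at hw
    rcases hw with rfl | rfl | rfl <;> contradiction
  · rintro a ⟨hxa, hax, hay, haS⟩ b ⟨hyb, hbx, hby, hbS⟩ hab
    obtain ⟨w, hw, hwS⟩ := hP (.cons hxa (.cons hab (.cons hyb.symm .nil)))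
      (by simp [Walk.cons_isPath_iff, hxy, Ne.symm hax, Ne.symm hbx, hay, hab.ne, hby]) (.inr rfl)
    simp only [Walk.support_cons, Walk.support_nil, List.mem_cons, List.not_mem_nil,
      or_false] at hw
    rcases hw with rfl | rfl | rfl | rfl <;> contradiction

end SimpleGraph

/- The numerical estimates of the theorem; `δ` stands for the minimum degree and `t` for
`|S ∪ {x, y}|`. -/

theorem two_mul_add_le_five_mul {ε n k t δ : ℝ} (hε0 : 0 < ε) (hε1 : ε < 0.01) (hk : 1 ≤ k)
    (hkn : 2 * k ≤ ε ^ 13 * n) (hδ : n / 2 - ε ^ 3 * n - 1 / 2 < δ) (ht : t ≤ 5 * k + 2) :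
    2 * n + 3 * t + (2 * k + 1) ≤ 5 * δ := by
  have hn : 0 ≤ n := by nlinarith [pow_pos hε0 13]
  have hε3 : ε ^ 3 ≤ 1 / 1000000 := by
    calc ε ^ 3 ≤ (1 / 100) ^ 3 := by gcongr; norm_num at hε1; linarith
      _ = 1 / 1000000 := by norm_num
  have hε13 : ε ^ 13 ≤ 1 / 1000000 :=
    (pow_le_pow_of_le_one hε0.le (by norm_num at hε1; linarith) (by norm_num)).trans hε3
  nlinarith [mul_le_mul_of_nonneg_right hε3 hn, mul_le_mul_of_nonneg_right hε13 hn]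

theorem half_add_mul_sqrt_sub_le {ε n k t δ e c : ℝ} (hε0 : 0 < ε) (hε1 : ε < 0.01) (hk : 1 ≤ k)
    (hkn : 2 * k ≤ ε ^ 13 * n) (hδ : n / 2 - ε ^ 3 * n - 1 / 2 < δ) (ht : t ≤ 5 * k + 2)
    (he : e < (1 / 4 + ε ^ 6) * n ^ 2) (hc : e + 2 * δ * n ≤ 2 * c + (n + 2 * t) * n) :
    e / 2 + n / 2 * √(e - n ^ 2 / 4) - ε * n ^ 2 ≤ c := by
  have hn : 0 ≤ n := by nlinarith [pow_pos hε0 13]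
  have hε : ε ≤ 1 / 100 := by norm_num at hε1; linarith
  have hsqrt : √(e - n ^ 2 / 4) ≤ ε ^ 3 * n :=
    Real.sqrt_le_iff.2 ⟨by positivity, by nlinarith⟩
  have hε3 : ε ^ 3 ≤ ε / 10000 := by nlinarith [pow_pos hε0 2]
  have hε13 : ε ^ 13 ≤ ε / 10000 :=
    (pow_le_pow_of_le_one hε0.le (by linarith) (by norm_num)).trans hε3
  have hεn : 2 ≤ ε * n := by
    nlinarith [pow_le_pow_of_le_one hε0.le (by linarith : ε ≤ 1) (by norm_num : 1 ≤ 13)]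
  nlinarith [mul_le_mul_of_nonneg_left hsqrt hn, mul_le_mul_of_nonneg_right hε3 (sq_nonneg n),
    mul_le_mul_of_nonneg_right hε13 (sq_nonneg n), mul_le_mul_of_nonneg_right hkn hn,
    mul_le_mul_of_nonneg_right hδ.le hn, mul_le_mul_of_nonneg_right ht hn,
    mul_le_mul_of_nonneg_right hεn hn]

theorem statement12_general {V : Type} [Fintype V] (G : SimpleGraph V) [DecidableRel G.Adj]
    (k n e : ℕ) (hk : 4 ≤ k) (ε : ℝ) (hε0 : 0 < ε) (hε1 : ε < 0.01)
    (hn : Fintype.card V = n) (hnk : 2 * (k : ℝ) * ε ^ (-13 : ℤ) ≤ (n : ℝ))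
    (he : G.edgeSet.ncard = e)
    (he2 : (e : ℝ) < (1 / 4 + ε ^ 6) * (n : ℝ) ^ 2)
    (hδ : ∀ v : V, (n : ℝ) / 2 - ε ^ 3 * (n : ℝ) - 1 / 2 < (G.degree v : ℝ))
    (χ : Sym2 V → ℕ)
    (hχ : ∀ ⦃v : V⦄ (w : G.Walk v v), w.IsCycle → w.length = 2 * k + 1 →
      (w.edges.map χ).Nodup)
    (S : Finset V) (hS : S.card ≤ 5 * k) :
    (∀ x y : V, x ∉ S → y ∉ S → x ≠ y →
      ∃ p : G.Walk x y, p.IsPath ∧ (p.length = 2 ∨ p.length = 3) ∧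
        ∀ z ∈ p.support, z ∉ S) ∨
    (e : ℝ) / 2 + (n : ℝ) / 2 * Real.sqrt ((e : ℝ) - (n : ℝ) ^ 2 / 4) - ε * (n : ℝ) ^ 2 ≤
      ((χ '' G.edgeSet).ncard : ℝ) := by
  classical
  refine or_iff_not_imp_left.2 fun hpaths => ?_
  push Not at hpaths
  obtain ⟨x, y, hx, hy, hxy, hP⟩ := hpaths
  have : Nonempty V := ⟨x⟩
  set T := insert x (insert y S)
  obtain ⟨hAB, hnoadj⟩ := G.disjoint_and_forall_not_adj_of_short_paths_meet hx hy hxy hP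
  have hT : #T ≤ 5 * k + 2 := (card_insert_le _ _).trans (by linarith [card_insert_le y S])
  have hdeg (z : V) : G.minDegree ≤ #(G.neighborFinset z \ T) + #T :=
    (G.minDegree_le_degree z).trans
      (G.card_neighborFinset_eq_degree z ▸ card_le_card_sdiff_add_card)
  have hkn : 2 * (k : ℝ) ≤ ε ^ 13 * n := by
    rw [zpow_neg, show ε ^ (13 : ℤ) = ε ^ 13 by norm_cast, ← div_eq_mul_inv,
      div_le_iff₀ (by positivity)] at hnk
    linarith
  have hk1 : (1 : ℝ) ≤ k := by exact_mod_cast (by omega : 1 ≤ k)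
  obtain ⟨v, hv⟩ := G.exists_minimal_degree_vertex
  have hmin : (n : ℝ) / 2 - ε ^ 3 * n - 1 / 2 < G.minDegree := hv ▸ hδ v
  have hTr : (#T : ℝ) ≤ 5 * k + 2 := by exact_mod_cast hT
  have hsize : 2 * n + 3 * #T + (2 * k + 1) ≤ 5 * G.minDegree := by
    exact_mod_cast two_mul_add_le_five_mul hε0 hε1 hk1 hkn hmin hTr
  have hcount := G.card_edgeFinset_add_le_card_colors (ℓ := 2 * k + 1) (by omega) χ hχ hAB hnoadj
    G.minDegree_le_degree (hdeg x) (hdeg y) (hn ▸ hsize)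
  rw [hn] at hcount
  rw [← G.coe_edgeFinset, ← coe_image, Set.ncard_coe_finset]
  rw [← G.coe_edgeFinset, Set.ncard_coe_finset] at he
  subst he
  exact half_add_mul_sqrt_sub_le hε0 hε1 hk1 hkn hmin hTr he2 (by exact_mod_cast hcount)

/-- Let `k ≥ 4`, `0 < ε < 0.01`, and `n ≥ 2k ε⁻¹³`. Let `G` be a simple graph with `n` vertices
and `e` edges, `n²/4 < e < (1/4 + ε⁶) n²`, whose minimum degree `δ` satisfies
`δ > n/2 - ε³ n - 1/2`, equipped with an edge-coloring in which every cycle of length `2k+1` is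
rainbow. Let `S` be a vertex set with `|S| ≤ 5k`. Then either any two vertices `x, y ∉ S` are
connected by a path of length `2` or `3` avoiding `S`, or the number of colors used is at least
`e/2 + (n/2)·√(e - n²/4) - ε n²`. -/
theorem statement12 {V : Type} [Fintype V] (G : SimpleGraph V) [DecidableRel G.Adj]
    (k n e : ℕ) (hk : 4 ≤ k) (ε : ℝ) (hε0 : 0 < ε) (hε1 : ε < 0.01)
    (hn : Fintype.card V = n) (hnk : 2 * (k : ℝ) * ε ^ (-13 : ℤ) ≤ (n : ℝ))
    (he : G.edgeSet.ncard = e)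
    (he1 : (n : ℝ) ^ 2 / 4 < (e : ℝ)) (he2 : (e : ℝ) < (1 / 4 + ε ^ 6) * (n : ℝ) ^ 2)
    (hδ : ∀ v : V, (n : ℝ) / 2 - ε ^ 3 * (n : ℝ) - 1 / 2 < (G.degree v : ℝ))
    (χ : Sym2 V → ℕ)
    (hχ : ∀ ⦃v : V⦄ (w : G.Walk v v), w.IsCycle → w.length = 2 * k + 1 →
      (w.edges.map χ).Nodup)
    (S : Finset V) (hS : S.card ≤ 5 * k) :
    (∀ x y : V, x ∉ S → y ∉ S → x ≠ y →
      ∃ p : G.Walk x y, p.IsPath ∧ (p.length = 2 ∨ p.length = 3) ∧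
        ∀ z ∈ p.support, z ∉ S) ∨
    (e : ℝ) / 2 + (n : ℝ) / 2 * Real.sqrt ((e : ℝ) - (n : ℝ) ^ 2 / 4) - ε * (n : ℝ) ^ 2 ≤
      ((χ '' G.edgeSet).ncard : ℝ) :=
  statement12_general G k n e hk ε hε0 hε1 hn hnk he he2 hδ χ hχ S hS
end

section
/- Let k ≥ 4 be an integer, let 0 < ε < 0.01 be a real number, and let n ≥ 2k·ε^{−13}. Let G = (V, E) be a simple graph with n vertices whose minimum degree δ satisfies δ > n/2 − ε³·n − 1/2, and suppose that for every vertex set S ⊆ V with |S| ≤ 5k and any two vertices u, v ∈ V \ S there is a path of length 2 or 3 from u to v in G avoiding all vertices of S. Let p and q be adjacent vertices of G with more than n/6 common neighbors, and set A := N(p) \ {q}. Then any two distinct edges of G, each of which has at least one endpoint in A and neither of whose endpoints lies in {p, q}, lie on a common cycle of length 2k+1. -/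
/-!
Let `C = N(p) ∩ N(q)`. Since `|C| > n/6` is much larger than `k`, there is always a vertex of `C`
outside any `O(k)` forbidden vertices. A path towards `p` can therefore be grown by hopping, along a
path of length 2 or 3, to a fresh `c ∈ C`, and finished by `c p`, `c q p` or `c q c' p`; this
gives `u`–`p` paths of every length `l ≥ 3` avoiding any `O(k)` prescribed vertices. Length 3
needs the degree bound: two vertices with few common neighbours together see almost every
vertex, in particular a fresh vertex of `C`.

Two edges sharing a vertex `s` are closed into a `(2k+1)`-cycle by a path of length `2k - 1`
through `p` avoiding `s`. Two disjoint edges `a₁b₁`, `a₂b₂` with `a₁, a₂ ∈ N(p)` are closed by a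
short path `b₁ ⋯ b₂` followed by `a₂ ⋯ p a₁`, the length of `a₂ ⋯ p` chosen to make the total
`2k + 1`.
-/

namespace SimpleGraph

variable {V : Type*} {G : SimpleGraph V} {u v w : V}

namespace Walk

theorem IsPath.append {p : G.Walk u v} {q : G.Walk v w} (hp : p.IsPath) (hq : q.IsPath)
    (h : ∀ z ∈ p.support, z ∈ q.support → z = v) : (p.append q).IsPath := by
  rw [isPath_def, support_append]
  refine hp.support_nodup.append (hq.support_nodup.sublist q.support.tail_sublist) ?_
  intro z hzp hzq
  obtain rfl := h z hzp (List.mem_of_mem_tail hzq)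
  have hq' := hq.support_nodup
  rw [← cons_tail_support q] at hq'
  exact (List.nodup_cons.mp hq').1 hzq

theorem exists_adj_adj_of_length_eq_two (p : G.Walk u v) (h : p.length = 2) :
    ∃ x ∈ p.support, G.Adj u x ∧ G.Adj x v := by
  match p, h with
  | .cons h₁ (.cons h₂ .nil), _ => exact ⟨_, by simp, h₁, h₂⟩

end Walk

open Walk in
theorem exists_isCycle_of_disjoint_paths {x₁ y₁ x₂ y₂ : V} (h₁ : G.Adj x₁ y₁)
    (h₂ : G.Adj x₂ y₂) {P : G.Walk y₁ x₂} {Q : G.Walk y₂ x₁} (hP : P.IsPath) (hQ : Q.IsPath)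
    (hPQ : ∀ z ∈ Q.support, z ∉ P.support) (hlen : 0 < P.length + Q.length) :
    ∃ (v : V) (c : G.Walk v v), c.IsCycle ∧ c.length = P.length + Q.length + 2 ∧
      s(x₁, y₁) ∈ c.edges ∧ s(x₂, y₂) ∈ c.edges := by
  have hR : (P.append (cons h₂ Q)).IsPath := by
    refine hP.append (hQ.cons fun hx => hPQ _ hx P.end_mem_support) fun z hzP hzQ => ?_
    rw [support_cons, List.mem_cons] at hzQ
    exact hzQ.resolve_right fun hz => hPQ z hz hzP
  refine ⟨x₁, cons h₁ (P.append (cons h₂ Q)),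
    (cons_isCycle_iff _ _).2 ⟨hR, fun he => ?_⟩, ?_, by simp, by simp⟩
  · have := hR.length_eq_one_of_mem_edges (Sym2.eq_swap ▸ he)
    simp only [length_append, length_cons] at this
    omega
  · simp only [length_cons, length_append]
    omega

def HasPathAvoiding (G : SimpleGraph V) (S : Finset V) (u v : V) (l : ℕ) : Prop :=
  ∃ w : G.Walk u v, w.IsPath ∧ w.length = l ∧ ∀ z ∈ w.support, z ∉ S

namespace HasPathAvoiding

variable {S : Finset V} {l : ℕ}

theorem nil (hv : v ∉ S) : G.HasPathAvoiding S v v 0 :=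
  ⟨.nil, .nil, rfl, by simpa⟩

theorem symm (h : G.HasPathAvoiding S u v l) : G.HasPathAvoiding S v u l :=
  let ⟨w, hw, hl, hwS⟩ := h
  ⟨w.reverse, hw.reverse, by simpa, by simpa⟩

theorem cons [DecidableEq V] (hadj : G.Adj u v) (hu : u ∉ S)
    (h : G.HasPathAvoiding (insert u S) v w l) : G.HasPathAvoiding S u w (l + 1) := by
  obtain ⟨p, hp, hl, hpS⟩ := h
  refine ⟨.cons hadj p, hp.cons fun hup => hpS u hup (Finset.mem_insert_self u S), by simp [hl],
    ?_⟩
  simp only [Walk.support_cons, List.mem_cons, forall_eq_or_imp]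
  exact ⟨hu, fun z hz hzS => hpS z hz (Finset.mem_insert_of_mem hzS)⟩

theorem of_append [DecidableEq V] {p : G.Walk u v} (hp : p.IsPath) (hpS : ∀ z ∈ p.support, z ∉ S)
    (h : G.HasPathAvoiding (S ∪ p.support.toFinset.erase v) v w l) :
    G.HasPathAvoiding S u w (p.length + l) := by
  obtain ⟨q, hq, hl, hqS⟩ := h
  refine ⟨p.append q, hp.append hq fun z hzp hzq => ?_, by simp [hl], fun z hz => ?_⟩
  · by_contra hzv
    exact hqS z hzq (by simp [hzv, hzp])
  · rcases (Walk.mem_support_append_iff _ _).mp hz with hz | hz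
    · exact hpS z hz
    · exact fun hzS => hqS z hz (Finset.mem_union_left _ hzS)

end HasPathAvoiding

theorem card_union_support_erase_le [DecidableEq V] (S : Finset V) (p : G.Walk u v) :
    (S ∪ p.support.toFinset.erase v).card ≤ S.card + p.length := by
  grw [Finset.card_union_le, Finset.card_erase_of_mem (by simp), List.toFinset_card_le,
    Walk.length_support]
  omega

/-- What the size and degree hypotheses provide to the path constructions; `b` bounds the number
of forbidden vertices. -/
structure RobustHub (G : SimpleGraph V) (p q : V) (b : ℕ) : Prop where
  adj : G.Adj p q
  exists_path : ∀ S : Finset V, S.card ≤ b → ∀ u v : V, u ∉ S → v ∉ S → u ≠ v →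
    ∃ w : G.Walk u v, w.IsPath ∧ (w.length = 2 ∨ w.length = 3) ∧ ∀ z ∈ w.support, z ∉ S
  exists_commonNeighbor : ∀ T : Finset V, T.card ≤ b → ∃ c, G.Adj p c ∧ G.Adj q c ∧ c ∉ T
  exists_commonNeighbor_adj : ∀ (u v : V) (S T : Finset V), S.card ≤ b → T.card ≤ b →
    (∀ x, G.Adj u x → G.Adj v x → x ∈ S) →
    ∃ c, G.Adj p c ∧ G.Adj q c ∧ c ∉ T ∧ (G.Adj u c ∨ G.Adj v c)

namespace RobustHub

variable [DecidableEq V] {p q : V} {b : ℕ} {S : Finset V}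

/-- Hop from `u` to a fresh common neighbour `c` of `p` and `q`, then continue from `c`. -/
theorem hasPathAvoiding_hub_of_hop (H : G.RobustHub p q b) {m : ℕ} (hu : u ∉ S) (hup : u ≠ p)
    (huq : u ≠ q) (hpS : p ∉ S) (hqS : q ∉ S) (hm : 4 ≤ m) (hb : S.card + 3 ≤ b)
    (hnext : ∀ (c : V) (S' : Finset V) (l : ℕ), G.Adj p c → G.Adj q c → c ∉ S' → p ∉ S' →
      q ∉ S' → 1 ≤ l → l < m → S'.card + l ≤ S.card + m → G.HasPathAvoiding S' c p l) :
    G.HasPathAvoiding S u p m := by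
  obtain ⟨c, hpc, hqc, hc⟩ := H.exists_commonNeighbor (S ∪ {u, p, q})
    ((Finset.card_union_le _ _).trans (by grw [Finset.card_le_three]; omega))
  simp only [Finset.mem_union, Finset.mem_insert, Finset.mem_singleton, not_or] at hc
  obtain ⟨hcS, hcu, -, -⟩ := hc
  obtain ⟨w, hw, hlen, hwS⟩ := H.exists_path (S ∪ {p, q})
    ((Finset.card_union_le _ _).trans (by grw [Finset.card_le_two]; omega)) u c
    (by simp [hu, hup, huq]) (by simp [hcS, hpc.ne', hqc.ne']) (Ne.symm hcu)
  have hpw : p ∉ w.support := fun h => hwS p h (by simp)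
  have hqw : q ∉ w.support := fun h => hwS q h (by simp)
  have key := HasPathAvoiding.of_append hw (fun z hz hzS => hwS z hz (Finset.mem_union_left _ hzS))
    (hnext c _ (m - w.length) hpc hqc (by simp [hcS]) (by simp [hpS, hpw]) (by simp [hqS, hqw])
      (by omega) (by omega) (by grw [card_union_support_erase_le]; omega))
  rwa [Nat.add_sub_cancel' (by omega)] at key

theorem hasPathAvoiding_hub_of_commonNeighbor (H : G.RobustHub p q b) {m : ℕ} (hm : 1 ≤ m) {c : V}
    (hpc : G.Adj p c) (hqc : G.Adj q c) (hcS : c ∉ S) (hpS : p ∉ S) (hqS : q ∉ S)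
    (hb : S.card + 2 * m ≤ b) : G.HasPathAvoiding S c p m := by
  induction m using Nat.strong_induction_on generalizing c S with
  | _ m ih =>
  match m, hm with
  | 1, _ => exact .cons hpc.symm hcS (.nil (by simp [hpc.ne, hpS]))
  | 2, _ =>
    exact .cons hqc.symm hcS (.cons H.adj.symm (by simp [hqc.ne, hqS])
      (.nil (by simp [hpc.ne, hpS, H.adj.ne])))
  | 3, _ =>
    obtain ⟨c', hpc', hqc', hc'⟩ := H.exists_commonNeighbor (S ∪ {c, p, q})
      ((Finset.card_union_le _ _).trans (by grw [Finset.card_le_three]; omega))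
    simp only [Finset.mem_union, Finset.mem_insert, Finset.mem_singleton, not_or] at hc'
    obtain ⟨hc'S, hc'c, hc'p, hc'q⟩ := hc'
    exact .cons hqc.symm hcS (.cons hqc' (by simp [hqc.ne, hqS])
      (.cons hpc'.symm (by simp [hc'S, hc'c, hc'q])
        (.nil (by simp [hpS, hpc.ne, hpc'.ne, H.adj.ne]))))
  | m + 4, _ =>
    refine H.hasPathAvoiding_hub_of_hop hcS hpc.ne' hqc.ne' hpS hqS (by omega) (by omega)
      fun c' S' l hpc' hqc' hc'S' hpS' hqS' hl hlm hS' => ?_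
    exact ih l hlm hl hpc' hqc' hc'S' hpS' hqS' (by omega)

theorem hasPathAvoiding_hub_three (H : G.RobustHub p q b) (hu : u ∉ S) (hup : u ≠ p) (huq : u ≠ q)
    (hpS : p ∉ S) (hqS : q ∉ S) (hb : S.card + 4 ≤ b) : G.HasPathAvoiding S u p 3 := by
  by_cases hw : ∃ w, G.Adj u w ∧ G.Adj w p ∧ w ∉ S
  · obtain ⟨w, huw, hwp, hwS⟩ := hw
    by_cases hy : ∃ y, G.Adj u y ∧ G.Adj y w ∧ y ∉ S ∧ y ≠ p
    · obtain ⟨y, huy, hyw, hyS, hyp⟩ := hy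
      exact .cons huy hu (.cons hyw (by simp [hyS, huy.ne']) (.cons hwp
        (by simp [hwS, hyw.ne', huw.ne']) (.nil (by simp [hpS, hwp.ne', hyp.symm, hup.symm]))))
    -- Now `u` and `w` have few common neighbours, so together they see a fresh common
    -- neighbour `c` of `p` and `q`.
    obtain ⟨c, hpc, hqc, hc, huc | hwc⟩ := H.exists_commonNeighbor_adj u w (insert p S)
      (S ∪ {u, w, p}) ((Finset.card_insert_le _ _).trans (by omega))
      ((Finset.card_union_le _ _).trans (by grw [Finset.card_le_three]; omega))
      (fun y huy hwy => by
        by_contra hyS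
        simp only [Finset.mem_insert, not_or] at hyS
        exact hy ⟨y, huy, hwy.symm, hyS.2, hyS.1⟩)
    all_goals
      simp only [Finset.mem_union, Finset.mem_insert, Finset.mem_singleton, not_or] at hc
      obtain ⟨hcS, hcu, hcw, -⟩ := hc
    · exact .cons huc hu (.cons hqc.symm (by simp [hcS, hcu]) (.cons H.adj.symm
        (by simp [hqS, hqc.ne, huq.symm]) (.nil (by simp [hpS, H.adj.ne, hpc.ne, hup.symm]))))
    · exact .cons huw hu (.cons hwc (by simp [hwS, huw.ne']) (.cons hpc.symm
        (by simp [hcS, hcu, hcw]) (.nil (by simp [hpS, hpc.ne, hwp.ne', hup.symm]))))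
  · obtain ⟨w, hw', hlen, hwS⟩ := H.exists_path (insert q S)
      ((Finset.card_insert_le _ _).trans (by omega)) u p (by simp [hu, huq])
      (by simp [hpS, H.adj.ne]) hup
    refine ⟨w, hw', hlen.resolve_left fun h2 => ?_, fun z hz hzS => hwS z hz (by simp [hzS])⟩
    obtain ⟨x, hx, hux, hxp⟩ := w.exists_adj_adj_of_length_eq_two h2
    exact hw ⟨x, hux, hxp, fun h => hwS x hx (by simp [h])⟩

theorem hasPathAvoiding_hub (H : G.RobustHub p q b) {l : ℕ} (hl : 3 ≤ l) (hu : u ∉ S)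
    (hup : u ≠ p) (huq : u ≠ q) (hpS : p ∉ S) (hqS : q ∉ S) (hb : S.card + 2 * l ≤ b) :
    G.HasPathAvoiding S u p l := by
  obtain rfl | hl := hl.eq_or_lt
  · exact H.hasPathAvoiding_hub_three hu hup huq hpS hqS (by omega)
  refine H.hasPathAvoiding_hub_of_hop hu hup huq hpS hqS hl (by omega)
    fun c S' m hpc hqc hcS' hpS' hqS' hm hml hS' => ?_
  exact H.hasPathAvoiding_hub_of_commonNeighbor hm hpc hqc hcS' hpS' hqS' (by omega)

theorem hasPathAvoiding (H : G.RobustHub p q b) {x y : V} {L : ℕ} (hL : 6 ≤ L) (hxy : x ≠ y)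
    (hx : x ∉ S) (hy : y ∉ S) (hxp : x ≠ p) (hxq : x ≠ q) (hyp : y ≠ p) (hyq : y ≠ q)
    (hpS : p ∉ S) (hqS : q ∉ S) (hb : S.card + 2 * L ≤ b) : G.HasPathAvoiding S y x L := by
  obtain ⟨w, hw, hlen, hwS⟩ := H.exists_path (S ∪ {x, q})
    ((Finset.card_union_le _ _).trans (by grw [Finset.card_le_two]; omega)) y p
    (by simp [hy, hxy.symm, hyq]) (by simp [hpS, hxp.symm, H.adj.ne]) hyp
  have key := HasPathAvoiding.of_append hw (fun z hz hzS => hwS z hz (Finset.mem_union_left _ hzS))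
    (H.hasPathAvoiding_hub (l := L - w.length) (by omega)
      (by simpa [hx] using fun _ h => hwS x h (by simp)) hxp hxq (by simp [hpS])
      (by simpa [hqS] using fun _ h => hwS q h (by simp))
      (by grw [card_union_support_erase_le]; omega)).symm
  rwa [Nat.add_sub_cancel' (by omega)] at key

theorem exists_isCycle_of_shared_vertex (H : G.RobustHub p q b) {k : ℕ} (hk : 4 ≤ k)
    (hb : 4 * k ≤ b) {e₁ e₂ : Sym2 V} {s : V} (he₁ : e₁ ∈ G.edgeSet) (he₂ : e₂ ∈ G.edgeSet)
    (hne : e₁ ≠ e₂) (hs₁ : s ∈ e₁) (hs₂ : s ∈ e₂) (hpq₁ : ∀ a ∈ e₁, a ≠ p ∧ a ≠ q)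
    (hpq₂ : ∀ a ∈ e₂, a ≠ p ∧ a ≠ q) :
    ∃ (v : V) (c : G.Walk v v), c.IsCycle ∧ c.length = 2 * k + 1 ∧ e₁ ∈ c.edges ∧
      e₂ ∈ c.edges := by
  obtain ⟨x, rfl⟩ := Sym2.mem_iff_exists.mp hs₁
  obtain ⟨y, rfl⟩ := Sym2.mem_iff_exists.mp hs₂
  have hxy : x ≠ y := by rintro rfl; exact hne rfl
  rw [mem_edgeSet] at he₁ he₂
  obtain ⟨hsp, hsq⟩ := hpq₁ s (Sym2.mem_mk_left _ _)
  obtain ⟨hxp, hxq⟩ := hpq₁ x (Sym2.mem_mk_right _ _)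
  obtain ⟨hyp, hyq⟩ := hpq₂ y (Sym2.mem_mk_right _ _)
  obtain ⟨Q, hQ, hQlen, hQs⟩ := H.hasPathAvoiding (S := {s}) (L := 2 * k - 1) (by omega) hxy
    (by simp [he₁.ne']) (by simp [he₂.ne']) hxp hxq hyp hyq (by simp [hsp.symm])
    (by simp [hsq.symm]) (by simp only [Finset.card_singleton]; omega)
  obtain ⟨v, c, hc, hclen, h₁, h₂⟩ := exists_isCycle_of_disjoint_paths he₁.symm he₂
    Walk.IsPath.nil hQ (by simpa using hQs) (by simp only [Walk.length_nil]; omega)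
  exact ⟨v, c, hc, by simp only [Walk.length_nil] at hclen; omega, Sym2.eq_swap ▸ h₁, h₂⟩

theorem exists_isCycle_of_disjoint_edges (H : G.RobustHub p q b) {k : ℕ} (hk : 4 ≤ k)
    (hb : 4 * k ≤ b) {a₁ b₁ a₂ b₂ : V} (h₁ : G.Adj a₁ b₁) (h₂ : G.Adj a₂ b₂)
    (hpa₁ : G.Adj p a₁) (hpa₂ : G.Adj p a₂) (ha₁q : a₁ ≠ q) (ha₂q : a₂ ≠ q) (hb₁p : b₁ ≠ p)
    (hb₁q : b₁ ≠ q) (hb₂p : b₂ ≠ p) (hb₂q : b₂ ≠ q) (haa : a₁ ≠ a₂) (hab : a₁ ≠ b₂)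
    (hba : b₁ ≠ a₂) (hbb : b₁ ≠ b₂) :
    ∃ (v : V) (c : G.Walk v v), c.IsCycle ∧ c.length = 2 * k + 1 ∧ s(a₁, b₁) ∈ c.edges ∧
      s(a₂, b₂) ∈ c.edges := by
  obtain ⟨P, hP, hPlen, hPS⟩ := H.exists_path {p, q, a₁, a₂}
    (Finset.card_le_four.trans (by omega)) b₁ b₂
    (by simp [hb₁p, hb₁q, h₁.ne', hba]) (by simp [hb₂p, hb₂q, hab.symm, h₂.ne']) hbb
  have hP' : ∀ z ∈ ({p, q, a₁, a₂} : Finset V), z ∉ P.support.toFinset :=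
    fun z hz hzP => hPS z (List.mem_toFinset.mp hzP) hz
  have hPcard : P.support.toFinset.card ≤ P.length + 1 :=
    (List.toFinset_card_le _).trans_eq P.length_support
  -- `Q` runs `a₂ ⋯ p` on an exact length, then closes with the edge `p a₁`.
  obtain ⟨Q, hQ, hQlen, hQP⟩ :
      G.HasPathAvoiding P.support.toFinset a₂ a₁ (2 * k - 1 - P.length) := by
    have hQ := H.hasPathAvoiding_hub (S := insert a₁ P.support.toFinset)
      (l := 2 * k - 2 - P.length) (by omega) (by simp [haa.symm, hP' a₂])
      hpa₂.ne' ha₂q (by simp [hpa₁.ne, hP' p]) (by simp [ha₁q.symm, hP' q])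
      (by grw [Finset.card_insert_le]; omega)
    have := (HasPathAvoiding.cons hpa₁.symm (hP' a₁ (by simp)) hQ.symm).symm
    rwa [show 2 * k - 2 - P.length + 1 = 2 * k - 1 - P.length by omega] at this
  obtain ⟨v, c, hc, hclen, he₁, he₂⟩ := exists_isCycle_of_disjoint_paths h₁ h₂.symm hP hQ
    (by simpa using hQP) (by omega)
  exact ⟨v, c, hc, by omega, he₁, Sym2.eq_swap ▸ he₂⟩

end RobustHub

theorem exists_mem_adj_of_card_lt [Fintype V] [DecidableEq V] [DecidableRel G.Adj]
    {C S T : Finset V} (hS : ∀ x, G.Adj u x → G.Adj v x → x ∈ S)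
    (hcard : Fintype.card V + S.card + T.card < C.card + G.degree u + G.degree v) :
    ∃ c ∈ C, c ∉ T ∧ (G.Adj u c ∨ G.Adj v c) := by
  by_contra! hC
  have hCsub : C ⊆ T ∪ (G.neighborFinset u ∪ G.neighborFinset v)ᶜ := fun c hc => by
    by_cases hcT : c ∈ T
    · exact Finset.mem_union_left _ hcT
    · simp [hC c hc hcT]
  have hinter : (G.neighborFinset u ∩ G.neighborFinset v).card ≤ S.card :=
    Finset.card_le_card fun x hx => by
      simp only [Finset.mem_inter, mem_neighborFinset] at hx
      exact hS x hx.1 hx.2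
  have := (Finset.card_le_card hCsub).trans (Finset.card_union_le _ _)
  have := Finset.card_compl (G.neighborFinset u ∪ G.neighborFinset v)
  have := Finset.card_union_add_card_inter (G.neighborFinset u) (G.neighborFinset v)
  have := Finset.card_le_univ (G.neighborFinset u ∪ G.neighborFinset v)
  simp only [card_neighborFinset_eq_degree] at *
  omega

theorem RobustHub.of_card_commonNeighbors [Fintype V] [DecidableEq V] [DecidableRel G.Adj]
    {p q : V} {b : ℕ} (hpq : G.Adj p q)
    (hpath : ∀ S : Finset V, S.card ≤ b → ∀ u v : V, u ∉ S → v ∉ S → u ≠ v →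
      ∃ w : G.Walk u v, w.IsPath ∧ (w.length = 2 ∨ w.length = 3) ∧ ∀ z ∈ w.support, z ∉ S)
    (hC : b < (G.neighborFinset p ∩ G.neighborFinset q).card)
    (hdeg : ∀ v, Fintype.card V + 2 * b <
      (G.neighborFinset p ∩ G.neighborFinset q).card + 2 * G.degree v) :
    G.RobustHub p q b where
  adj := hpq
  exists_path := hpath
  exists_commonNeighbor T hT := by
    obtain ⟨c, hc, hcT⟩ := Finset.exists_mem_notMem_of_card_lt_card (hT.trans_lt hC)
    simp only [Finset.mem_inter, mem_neighborFinset] at hc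
    exact ⟨c, hc.1, hc.2, hcT⟩
  exists_commonNeighbor_adj u v S T hS hT hcn := by
    obtain ⟨c, hc, hcT, hadj⟩ := exists_mem_adj_of_card_lt
      (C := G.neighborFinset p ∩ G.neighborFinset q) (T := T) hcn (by
      have := hdeg u; have := hdeg v; omega)
    simp only [Finset.mem_inter, mem_neighborFinset] at hc
    exact ⟨c, hc.1, hc.2, hcT, hadj⟩

end SimpleGraph

theorem ten_mul_add_lt_div_six {k n : ℕ} {ε : ℝ} (hk : 1 ≤ k) (hε0 : 0 < ε) (hε1 : ε < 0.01)
    (hnk : 2 * (k : ℝ) * ε ^ (-13 : ℤ) ≤ n) : 10 * (k : ℝ) + 2 * ε ^ 3 * n + 1 < n / 6 := by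
  have hε13 : (10 : ℝ) ^ 26 ≤ ε ^ (-13 : ℤ) := by
    rw [zpow_neg, zpow_ofNat, show (10 : ℝ) ^ 26 = ((0.01 : ℝ) ^ 13)⁻¹ by norm_num]
    exact inv_anti₀ (by positivity) (pow_le_pow_left₀ hε0.le hε1.le 13)
  have hε3 : ε ^ 3 ≤ (0.01 : ℝ) ^ 3 := pow_le_pow_left₀ hε0.le hε1.le 3
  have hk' : (1 : ℝ) ≤ k := by exact_mod_cast hk
  have hn : 2 * (k : ℝ) * 10 ^ 26 ≤ n := le_trans (by gcongr) hnk
  nlinarith [mul_le_mul_of_nonneg_left hε3 (Nat.cast_nonneg (α := ℝ) n)]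

/-- Let `k ≥ 4`, `0 < ε < 0.01`, and `n ≥ 2k ε⁻¹³`. Let `G` be a simple graph with `n` vertices
whose minimum degree `δ` satisfies `δ > n/2 - ε³ n - 1/2`, and suppose that for every vertex
set `S` with `|S| ≤ 5k` and any two vertices `u, v ∉ S` there is a path of length `2` or `3`
from `u` to `v` avoiding `S`. Let `p, q` be adjacent vertices with more than `n/6` common
neighbors and let `A := N(p) \ {q}`. Then any two distinct edges, each having an endpoint in
`A` and none of whose endpoints is `p` or `q`, lie on a common cycle of length `2k+1`. -/
theorem statement13 {V : Type} [Fintype V] (G : SimpleGraph V) [DecidableRel G.Adj]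
    (k n : ℕ) (hk : 4 ≤ k) (ε : ℝ) (hε0 : 0 < ε) (hε1 : ε < 0.01)
    (hn : Fintype.card V = n) (hnk : 2 * (k : ℝ) * ε ^ (-13 : ℤ) ≤ (n : ℝ))
    (hδ : ∀ v : V, (n : ℝ) / 2 - ε ^ 3 * (n : ℝ) - 1 / 2 < (G.degree v : ℝ))
    (hpath : ∀ S : Finset V, S.card ≤ 5 * k → ∀ u v : V, u ∉ S → v ∉ S → u ≠ v →
      ∃ p : G.Walk u v, p.IsPath ∧ (p.length = 2 ∨ p.length = 3) ∧
        ∀ z ∈ p.support, z ∉ S)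
    (p q : V) (hpq : G.Adj p q)
    (hcommon : (n : ℝ) / 6 < ((G.neighborSet p ∩ G.neighborSet q).ncard : ℝ)) :
    ∀ e₁ ∈ G.edgeSet, ∀ e₂ ∈ G.edgeSet, e₁ ≠ e₂ →
      (∃ a ∈ e₁, a ∈ G.neighborSet p \ {q}) → (∀ a ∈ e₁, a ≠ p ∧ a ≠ q) →
      (∃ a ∈ e₂, a ∈ G.neighborSet p \ {q}) → (∀ a ∈ e₂, a ≠ p ∧ a ≠ q) →
      ∃ (v : V) (w : G.Walk v v), w.IsCycle ∧ w.length = 2 * k + 1 ∧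
        e₁ ∈ w.edges ∧ e₂ ∈ w.edges := by
  classical
  set C := G.neighborFinset p ∩ G.neighborFinset q
  have hC : (n : ℝ) / 6 < C.card := by
    rwa [← Set.ncard_coe_finset, Finset.coe_inter, SimpleGraph.coe_neighborFinset,
      SimpleGraph.coe_neighborFinset]
  have hnum := ten_mul_add_lt_div_six (by omega) hε0 hε1 hnk
  have hεn : 0 ≤ ε ^ 3 * n := by positivity
  have H : G.RobustHub p q (5 * k) := .of_card_commonNeighbors hpq hpath
    (by exact_mod_cast (by linarith : (5 * k : ℝ) < C.card))
    fun v => hn ▸ by exact_mod_cast (by linarith [hδ v] :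
      (n : ℝ) + 2 * (5 * k) < C.card + 2 * G.degree v)
  intro e₁ he₁ e₂ he₂ hne ⟨a₁, ha₁, hpa₁, ha₁q⟩ hpq₁ ⟨a₂, ha₂, hpa₂, ha₂q⟩ hpq₂
  by_cases hs : ∃ s, s ∈ e₁ ∧ s ∈ e₂
  · obtain ⟨s, hs₁, hs₂⟩ := hs
    exact H.exists_isCycle_of_shared_vertex hk (by omega) he₁ he₂ hne hs₁ hs₂ hpq₁ hpq₂
  push Not at hs
  obtain ⟨b₁, rfl⟩ := Sym2.mem_iff_exists.mp ha₁
  obtain ⟨b₂, rfl⟩ := Sym2.mem_iff_exists.mp ha₂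
  exact H.exists_isCycle_of_disjoint_edges hk (by omega) he₁ he₂ hpa₁ hpa₂ ha₁q ha₂q
    (hpq₁ b₁ (by simp)).1 (hpq₁ b₁ (by simp)).2 (hpq₂ b₂ (by simp)).1 (hpq₂ b₂ (by simp)).2
    (fun h => hs a₁ (by simp) (by simp [h])) (fun h => hs a₁ (by simp) (by simp [h]))
    (fun h => hs b₁ (by simp) (by simp [h])) (fun h => hs b₁ (by simp) (by simp [h]))
end

section
/- Let G be a simple graph on vertex set V, let x, y ∈ V, and let S ⊆ V with x, y ∉ S. Set Y := N(y) \ (S ∪ {x}) and suppose that every vertex of Y has at least |Y|/2 + 5k neighbors inside Y, where k ≥ 4. Then any two distinct edges of the induced subgraph G[Y] lie on a common cycle of length 2k+1 contained in G[Y]. -/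
/-!
In `G[Y]` any two vertices have more than `|Y| + 2k` neighbours in total, so they have a common
neighbour outside any prescribed set of at most `2k` vertices, and every vertex has more than `2k`
neighbours. Hence two distinct edges lie on a path of length at most 4 (through a common neighbour
if they are disjoint), the path extends greedily at one end to length `2k - 1`, and a common
neighbour of its ends off the path closes it into a cycle of length `2k + 1`.
-/

namespace SimpleGraph

variable {V : Type*} {G : SimpleGraph V}

theorem Walk.IsPath.ne_of_length_pos {u w : V} {p : G.Walk u w} (hp : p.IsPath)
    (hpos : 0 < p.length) : u ≠ w := by
  intro huw
  subst huw
  exact (hp.getVert_eq_start_iff le_rfl).not.mpr hpos.ne' (p.getVert_length)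

theorem Walk.IsPath.isCycle_cons_concat {u w z : V} {p : G.Walk u w} (hp : p.IsPath)
    (huw : u ≠ w) (hzu : G.Adj z u) (hwz : G.Adj w z) (hz : z ∉ p.support) :
    (Walk.cons hzu (p.concat hwz)).IsCycle := by
  rw [Walk.cons_isCycle_iff, Walk.edges_concat, List.concat_eq_append, List.mem_append,
    List.mem_singleton]
  refine ⟨hp.concat hz hwz, ?_⟩
  rintro (h | h)
  · exact hz (p.fst_mem_support_of_mem_edges h)
  · rcases Sym2.eq_iff.mp h with ⟨rfl, -⟩ | ⟨-, rfl⟩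
    · exact hz p.end_mem_support
    · exact huw rfl

theorem exists_isPath_mem_edges_of_mem_of_mem {v : V} {e₁ e₂ : Sym2 V}
    (h₁ : e₁ ∈ G.edgeSet) (h₂ : e₂ ∈ G.edgeSet) (hne : e₁ ≠ e₂) (hv₁ : v ∈ e₁) (hv₂ : v ∈ e₂) :
    ∃ (u w : V) (p : G.Walk u w), p.IsPath ∧ e₁ ∈ p.edges ∧ e₂ ∈ p.edges ∧ p.length = 2 := by
  obtain ⟨a, rfl⟩ := Sym2.mem_iff_exists.mp hv₁
  obtain ⟨d, rfl⟩ := Sym2.mem_iff_exists.mp hv₂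
  have had : a ≠ d := by rintro rfl; exact hne rfl
  have hva : G.Adj v a := h₁
  have hvd : G.Adj v d := h₂
  refine ⟨a, d, .cons hva.symm (.cons hvd .nil), ?_, by simp [Sym2.eq_swap], by simp, rfl⟩
  simp [hva.ne', hvd.ne, had]

section Finite

variable [Finite V]

variable (G) in
theorem ncard_neighborSet_lt_card (v : V) : (G.neighborSet v).ncard < Nat.card V :=
  Set.ncard_lt_card (G.neighborSet_ne_univ v)

variable (G) in
theorem exists_adj_adj_notMem (s : Finset V) (u w : V)
    (h : Nat.card V + s.card < (G.neighborSet u).ncard + (G.neighborSet w).ncard) :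
    ∃ z, G.Adj u z ∧ G.Adj w z ∧ z ∉ s := by
  have hunion := Set.ncard_le_card (G.neighborSet u ∪ G.neighborSet w)
  have hsum := Set.ncard_inter_add_ncard_union (G.neighborSet u) (G.neighborSet w)
  obtain ⟨z, ⟨hu, hw⟩, hz⟩ := Set.exists_mem_notMem_of_ncard_lt_ncard
    (s := (s : Set V)) (t := G.neighborSet u ∩ G.neighborSet w)
    (by rw [Set.ncard_coe_finset]; omega)
  exact ⟨z, hu, hw, hz⟩

theorem Walk.IsPath.exists_isPath_edges_subset_length_eq {u w : V} {p : G.Walk u w}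
    (hp : p.IsPath) {n : ℕ} (hn : p.length ≤ n) (hdeg : ∀ v, n < (G.neighborSet v).ncard) :
    ∃ (u' : V) (q : G.Walk u' w), q.IsPath ∧ p.edges ⊆ q.edges ∧ q.length = n := by
  classical
  obtain ⟨d, hd⟩ := Nat.exists_eq_add_of_le hn
  induction d generalizing u with
  | zero => exact ⟨u, p, hp, List.Subset.refl _, hd.symm⟩
  | succ d ih =>
    have hcard : (p.support.toFinset : Set V).ncard < (G.neighborSet u).ncard := by
      rw [Set.ncard_coe_finset]
      have := p.support.toFinset_card_le
      rw [Walk.length_support] at this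
      have := hdeg u
      omega
    obtain ⟨z, hz, hzp⟩ := Set.exists_mem_notMem_of_ncard_lt_ncard hcard
    have hzp : z ∉ p.support := by simpa using hzp
    obtain ⟨u', q, hq, hpq, hlen⟩ := ih (hp.cons hzp) (p := .cons (G.adj_symm hz) p)
      (by simp; omega) (by simp; omega)
    exact ⟨u', q, hq, fun e he ↦ hpq (by simp [he]), hlen⟩

theorem Walk.IsPath.exists_isCycle_edges_subset {u w : V} {p : G.Walk u w} (hp : p.IsPath)
    (hpos : 0 < p.length)
    (hdeg : Nat.card V + p.length + 1 < (G.neighborSet u).ncard + (G.neighborSet w).ncard) :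
    ∃ (v : V) (c : G.Walk v v), c.IsCycle ∧ c.length = p.length + 2 ∧ p.edges ⊆ c.edges := by
  classical
  obtain ⟨z, huz, hwz, hz⟩ := G.exists_adj_adj_notMem p.support.toFinset u w
    (by have := p.support.toFinset_card_le; rw [Walk.length_support] at this; omega)
  refine ⟨z, .cons huz.symm (p.concat hwz), ?_, by simp, fun e he ↦ by simp [he]⟩
  exact hp.isCycle_cons_concat (hp.ne_of_length_pos hpos) huz.symm hwz (by simpa using hz)

theorem exists_isPath_mem_edges_length_le_four {e₁ e₂ : Sym2 V}
    (h₁ : e₁ ∈ G.edgeSet) (h₂ : e₂ ∈ G.edgeSet) (hne : e₁ ≠ e₂)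
    (hdeg : ∀ u w, Nat.card V + 4 < (G.neighborSet u).ncard + (G.neighborSet w).ncard) :
    ∃ (u w : V) (p : G.Walk u w), p.IsPath ∧ e₁ ∈ p.edges ∧ e₂ ∈ p.edges ∧ p.length ≤ 4 := by
  classical
  by_cases hshare : ∃ v, v ∈ e₁ ∧ v ∈ e₂
  · obtain ⟨v, hv₁, hv₂⟩ := hshare
    obtain ⟨u, w, p, hp, hp₁, hp₂, hlen⟩ :=
      exists_isPath_mem_edges_of_mem_of_mem h₁ h₂ hne hv₁ hv₂
    exact ⟨u, w, p, hp, hp₁, hp₂, by omega⟩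
  push Not at hshare
  induction e₁ using Sym2.ind with | _ a b =>
  induction e₂ using Sym2.ind with | _ c d =>
  have hab : G.Adj a b := h₁
  have hcd : G.Adj c d := h₂
  obtain ⟨z, hbz, hcz, hz⟩ := G.exists_adj_adj_notMem {a, b, c, d} b c
    (by have := Finset.card_le_four (a := a) (b := b) (c := c) (d := d); have := hdeg b c; omega)
  simp only [Finset.mem_insert, Finset.mem_singleton, not_or] at hz
  simp only [Sym2.mem_iff, forall_eq_or_imp, forall_eq, not_or] at hshare
  refine ⟨a, d, .cons hab (.cons hbz (.cons hcz.symm (.cons hcd .nil))), ?_, by simp, by simp,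
    by simp⟩
  simp_all [hab.ne, hcd.ne, hbz.ne, hcz.ne, eq_comm]

theorem exists_isCycle_length_mem_edges {k : ℕ} (hk : 3 ≤ k)
    (hdeg : ∀ v, Nat.card V + 2 * k < 2 * (G.neighborSet v).ncard) {e₁ e₂ : Sym2 V}
    (h₁ : e₁ ∈ G.edgeSet) (h₂ : e₂ ∈ G.edgeSet) (hne : e₁ ≠ e₂) :
    ∃ (v : V) (c : G.Walk v v), c.IsCycle ∧ c.length = 2 * k + 1 ∧
      e₁ ∈ c.edges ∧ e₂ ∈ c.edges := by
  have hdeg₂ (u w : V) :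
      Nat.card V + 2 * k < (G.neighborSet u).ncard + (G.neighborSet w).ncard := by
    have := hdeg u; have := hdeg w; omega
  have hlarge (v : V) : 2 * k - 1 < (G.neighborSet v).ncard := by
    have := hdeg v; have := G.ncard_neighborSet_lt_card v; omega
  obtain ⟨u, w, p, hp, hp₁, hp₂, hlen⟩ := exists_isPath_mem_edges_length_le_four h₁ h₂ hne
    fun u w ↦ by have := hdeg₂ u w; omega
  obtain ⟨u', q, hq, hpq, hqlen⟩ :=
    hp.exists_isPath_edges_subset_length_eq (n := 2 * k - 1) (by omega) hlarge
  obtain ⟨v, c, hc, hclen, hqc⟩ :=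
    hq.exists_isCycle_edges_subset (by omega) (by have := hdeg₂ u' w; omega)
  exact ⟨v, c, hc, by omega, hqc (hpq hp₁), hqc (hpq hp₂)⟩

end Finite

theorem ncard_neighborSet_induce (s : Set V) (v : s) :
    ((G.induce s).neighborSet v).ncard = (G.neighborSet v ∩ s).ncard := by
  rw [← Set.ncard_image_of_injective _ Subtype.val_injective]
  congr 1
  ext x
  simp

end SimpleGraph

open SimpleGraph

theorem statement15_general {V : Type} [Fintype V] (G : SimpleGraph V) (k : ℕ) (hk : 4 ≤ k)
    (x y : V) (S : Set V) :
    ∀ Y : Set V, Y = G.neighborSet y \ (S ∪ {x}) →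
      (∀ z ∈ Y, (Y.ncard : ℝ) / 2 + 5 * (k : ℝ) ≤ ((G.neighborSet z ∩ Y).ncard : ℝ)) →
      ∀ e₁ ∈ (G.induce Y).edgeSet, ∀ e₂ ∈ (G.induce Y).edgeSet, e₁ ≠ e₂ →
        ∃ (v : Y) (w : (G.induce Y).Walk v v), w.IsCycle ∧ w.length = 2 * k + 1 ∧
          e₁ ∈ w.edges ∧ e₂ ∈ w.edges := by
  intro Y _ hdeg e₁ he₁ e₂ he₂ hne
  refine exists_isCycle_length_mem_edges (by omega) (fun v ↦ ?_) he₁ he₂ hne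
  have hv := hdeg v v.2
  rw [ncard_neighborSet_induce, Nat.card_coe_set_eq]
  have hk' : (1 : ℝ) ≤ k := by exact_mod_cast (by omega : 1 ≤ k)
  exact_mod_cast (by linarith : (Y.ncard : ℝ) + 2 * k < 2 * (G.neighborSet v ∩ Y).ncard)

/-- Let `G` be a simple graph, `x, y` vertices, `S` a vertex set with `x, y ∉ S`, and let
`Y := N(y) \ (S ∪ {x})`. Suppose every vertex of `Y` has at least `|Y|/2 + 5k` neighbors
inside `Y`, where `k ≥ 4`. Then any two distinct edges of the induced subgraph `G[Y]` lie on a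
common cycle of length `2k+1` contained in `G[Y]`. -/
theorem statement15 {V : Type} [Fintype V] (G : SimpleGraph V) (k : ℕ) (hk : 4 ≤ k)
    (x y : V) (S : Set V) (hx : x ∉ S) (hy : y ∉ S) :
    ∀ Y : Set V, Y = G.neighborSet y \ (S ∪ {x}) →
      (∀ z ∈ Y, (Y.ncard : ℝ) / 2 + 5 * (k : ℝ) ≤ ((G.neighborSet z ∩ Y).ncard : ℝ)) →
      ∀ e₁ ∈ (G.induce Y).edgeSet, ∀ e₂ ∈ (G.induce Y).edgeSet, e₁ ≠ e₂ →
        ∃ (v : Y) (w : (G.induce Y).Walk v v), w.IsCycle ∧ w.length = 2 * k + 1 ∧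
          e₁ ∈ w.edges ∧ e₂ ∈ w.edges :=
  statement15_general G k hk x y S
end

section
/- Let G be a simple graph with n vertices, e edges, and minimum degree δ, equipped with a given edge-coloring, and suppose A is a vertex set of G with |A| > n/2 + √(e − n²/4) (where e > n²/4) such that any two distinct edges with an endpoint in A receive distinct colors. Then the number of colors used is at least e − (n − |A|)(n − |A| − 1)/2 > e/2 + (n/2)·√(e − n²/4). -/
open SimpleGraph

/-- Let `G` be a simple graph with `n` vertices, `e > n²/4` edges, and an edge-coloring `χ`.
Suppose `A` is a vertex set with `|A| > n/2 + √(e - n²/4)` such that any two distinct edges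
each having an endpoint in `A` receive distinct colors. Then the number of colors used is at
least `e - (n - |A|)(n - |A| - 1)/2 > e/2 + (n/2)·√(e - n²/4)`. -/
theorem statement17 {V : Type} [Fintype V] (G : SimpleGraph V)
    (n e : ℕ) (hn : Fintype.card V = n) (he : G.edgeSet.ncard = e)
    (he' : (n : ℝ) ^ 2 / 4 < (e : ℝ))
    (A : Finset V)
    (hA : (n : ℝ) / 2 + Real.sqrt ((e : ℝ) - (n : ℝ) ^ 2 / 4) < (A.card : ℝ))
    (χ : Sym2 V → ℕ)
    (hχ : ∀ e₁ ∈ G.edgeSet, ∀ e₂ ∈ G.edgeSet,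
      (∃ a ∈ e₁, a ∈ A) → (∃ a ∈ e₂, a ∈ A) → χ e₁ = χ e₂ → e₁ = e₂) :
    (e : ℝ) - ((n : ℝ) - (A.card : ℝ)) * ((n : ℝ) - (A.card : ℝ) - 1) / 2 ≤
      ((χ '' G.edgeSet).ncard : ℝ) ∧
    (e : ℝ) / 2 + (n : ℝ) / 2 * Real.sqrt ((e : ℝ) - (n : ℝ) ^ 2 / 4) <
      (e : ℝ) - ((n : ℝ) - (A.card : ℝ)) * ((n : ℝ) - (A.card : ℝ) - 1) / 2 := by

  classical
  have hAn : A.card ≤ n := hn ▸ A.card_le_univ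
  set s := Real.sqrt ((e : ℝ) - (n : ℝ) ^ 2 / 4) with hs
  have hs0 : 0 ≤ s := Real.sqrt_nonneg _
  have hs2 : s ^ 2 = (e : ℝ) - (n : ℝ) ^ 2 / 4 :=
    Real.sq_sqrt (by linarith)
  have hAnR : (A.card : ℝ) ≤ (n : ℝ) := by exact_mod_cast hAn
  constructor
  · set B : Set (Sym2 V) := {ed | ed ∈ G.edgeSet ∧ ∃ v ∈ ed, v ∈ A} with hB
    have hBsub : B ⊆ G.edgeSet := fun x hx => hx.1
    have hinj : Set.InjOn χ B := fun x hx y hy hxy =>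
      hχ x hx.1 y hy.1 hx.2 hy.2 hxy
    have h1 : B.ncard ≤ (χ '' G.edgeSet).ncard := by
      rw [← Set.ncard_image_of_injOn hinj]
      exact Set.ncard_le_ncard (Set.image_mono hBsub) (Set.toFinite _)
    have hC : G.edgeSet \ B ⊆ ↑((Aᶜ : Finset V).offDiag.image Sym2.mk.uncurry) := by
      rintro ed ⟨hed, hbad⟩
      induction ed with
      | _ u v =>
        have hne : u ≠ v := G.ne_of_adj (G.mem_edgeSet.mp hed)
        have hu : u ∉ A := fun h => hbad ⟨hed, u, by simp, h⟩
        have hv : v ∉ A := fun h => hbad ⟨hed, v, by simp, h⟩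
        simp only [Finset.coe_image, Set.mem_image, Finset.mem_coe,
          Finset.mem_offDiag, Finset.mem_compl]
        exact ⟨(u, v), ⟨hu, hv, hne⟩, rfl⟩
    have h2 : (G.edgeSet \ B).ncard ≤ (n - A.card).choose 2 := by
      have := Set.ncard_le_ncard hC (Set.toFinite _)
      rwa [Set.ncard_coe_finset, Sym2.card_image_offDiag, Finset.card_compl,
        hn] at this
    have h3 : (G.edgeSet \ B).ncard + B.ncard = e := by
      rw [Set.ncard_diff_add_ncard_of_subset hBsub (Set.toFinite _), he]
    have h4 : ((n - A.card).choose 2 : ℝ) =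
        ((n : ℝ) - (A.card : ℝ)) * ((n : ℝ) - (A.card : ℝ) - 1) / 2 := by
      rw [Nat.cast_choose_two, Nat.cast_sub hAn]
    have h1' : (B.ncard : ℝ) ≤ ((χ '' G.edgeSet).ncard : ℝ) := by exact_mod_cast h1
    have h2' : ((G.edgeSet \ B).ncard : ℝ) ≤ ((n - A.card).choose 2 : ℝ) := by
      exact_mod_cast h2
    have h3' : ((G.edgeSet \ B).ncard : ℝ) + (B.ncard : ℝ) = (e : ℝ) := by
      exact_mod_cast h3
    linarith
  · set x : ℝ := (n : ℝ) - (A.card : ℝ) with hx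
    have hx0 : 0 ≤ x := by linarith
    have hxlt : x < (n : ℝ) / 2 - s := by simp only [hx]; linarith
    have key : 0 < ((n : ℝ) / 2 - s - x) * ((n : ℝ) / 2 - s + x) := by
      apply mul_pos <;> linarith
    nlinarith [key, hs2, hx0]
end
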